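/- arXiv:1709.00707 — 9 statements merged into one kernel-verified Lean document; each statement's English description precedes it below -/
import Mathlib

section
/- Let P be a network-local behavior realized by some local model M with hidden-variable spaces Ω_1, …, Ω_n, and let d = Π_i (A i) · Π_i (X i). Then there exist a weight vector w : Fin (d+1) → ℝ with w k ≥ 0 and Σ_k w k = 1, and points μ : Fin (d+1) → Ω_1, such that for all outputs ā and inputs x̄: P(ā|x̄) = Σ_{k=1}^{d+1} w k · ∫_{Π_{j≥2} Ω_j} Π_i R_i (a_i) (x_i) (λ_{[i]}) d(⊗_{j≥2} ρ_j)(λ), where in the integrand the value of the first hidden variable is fixed to λ_1 = μ k. In other words, P is reproduced by a model of cardinality (d+1, c_2, …, c_n) in which the first source is replaced by a discrete source on Fin (d+1), all other sources and all response functions being unchanged except for restriction of their first hidden-variable argument. -/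
open MeasureTheory

def extendHV {n : ℕ} {Ω : Fin n → Type} (j0 : Fin n) (μ0 : Ω j0)
    (lam : ∀ j : {j : Fin n // j ≠ j0}, Ω j.1) (j : Fin n) : Ω j :=
  if h : j = j0 then cast (congrArg Ω h.symm) μ0 else lam ⟨j, h⟩

open Module Set Filter

/-!
Fixing the first hidden variable to `ω` turns the model into a vector `G ω ∈ ℝ^d` of conditional
behaviours, and Fubini gives `P = ∫ G dρ₁`. In finite dimension the mean of a probability measure
lies in the convex hull of the values of `G`: otherwise a supporting hyperplane through the mean
contains `G` almost surely, and one recurses in that hyperplane. Carathéodory's theorem then writes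
the mean as a convex combination of `d + 1` values `G (μ k)`.
-/

section ConvexHull

variable {E : Type*} [NormedAddCommGroup E] [NormedSpace ℝ E] [FiniteDimensional ℝ E]

theorem Convex.exists_dual_ne_zero_le_of_mem_closure {K : Set E} (hK : Convex ℝ K) {x : E}
    (hx : x ∈ closure K) (hxK : x ∉ interior K) :
    ∃ L : StrongDual ℝ E, L ≠ 0 ∧ ∀ a ∈ K, L a ≤ L x := by
  rcases (interior K).eq_empty_or_nonempty with hint | hint
  · -- `K` lies in a proper affine subspace through `x`; a functional vanishing on its direction
    -- is constant on `K`.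
    have hspan : affineSpan ℝ K ≠ ⊤ := fun h => by
      simpa [hint] using hK.interior_nonempty_iff_affineSpan_eq_top.mpr h
    have hxspan : x ∈ affineSpan ℝ K :=
      (affineSpan ℝ K).closed_of_finiteDimensional.closure_subset_iff.mpr
        (subset_affineSpan ℝ K) hx
    obtain ⟨L, hL0, hLker⟩ := (affineSpan ℝ K).direction.exists_le_ker_of_lt_top <|
      lt_top_iff_ne_top.mpr fun h =>
        hspan ((AffineSubspace.direction_eq_top_iff_of_nonempty ⟨x, hxspan⟩).mp h)
    refine ⟨LinearMap.toContinuousLinearMap L, by simpa using hL0, fun a ha => le_of_eq ?_⟩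
    have := hLker (AffineSubspace.vsub_mem_direction (subset_affineSpan ℝ K ha) hxspan)
    simpa [sub_eq_zero] using this
  · exact geometric_hahn_banach_of_nonempty_interior_point hK hxK hint

variable {α : Type*} [MeasurableSpace α] {μ : Measure α} [IsProbabilityMeasure μ]

theorem zero_mem_convexHull_image_of_integral_eq_zero {f : α → E} (hf : Integrable f μ)
    (hf0 : ∫ ω, f ω ∂μ = 0) {S : Set α} (hS : S ∈ ae μ) : (0 : E) ∈ convexHull ℝ (f '' S) := by
  induction hN : finrank ℝ E using Nat.strong_induction_on generalizing E f S with
  | _ N ih =>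
  by_contra h0K
  have hconv := convex_convexHull ℝ (f '' S)
  have h0cl : (0 : E) ∈ closure (convexHull ℝ (f '' S)) := hf0 ▸
    hconv.closure.integral_mem isClosed_closure (Filter.mem_of_superset hS fun ω hω =>
      subset_closure (subset_convexHull ℝ _ (mem_image_of_mem f hω))) hf
  obtain ⟨L, hL0, hLK⟩ :=
    hconv.exists_dual_ne_zero_le_of_mem_closure h0cl fun h => h0K (interior_subset h)
  have hLf : ∀ᵐ ω ∂μ, L (f ω) = 0 := by
    have hnonneg : 0 ≤ᵐ[μ] fun ω => -L (f ω) := Filter.mem_of_superset hS fun ω hω => by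
      simpa using hLK _ (subset_convexHull ℝ _ (mem_image_of_mem f hω))
    have hint : ∫ ω, -L (f ω) ∂μ = 0 := by
      rw [integral_neg, L.integral_comp_comm hf, hf0, map_zero, neg_zero]
    filter_upwards [(integral_eq_zero_iff_of_nonneg_ae hnonneg (L.integrable_comp hf).neg).mp
      hint] with ω h
    simpa using h
  set V := LinearMap.ker (L : E →ₗ[ℝ] ℝ)
  obtain ⟨P, hP⟩ := Submodule.ClosedComplemented.of_finiteDimensional V
  have hV : finrank ℝ V < N := hN ▸ Submodule.finrank_lt fun h =>
    hL0 (ContinuousLinearMap.coe_injective (by simpa using LinearMap.ker_eq_top.mp h))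
  have h0V := ih _ hV (P.integrable_comp hf) (by rw [P.integral_comp_comm hf, hf0, map_zero])
    (inter_mem hS hLf) rfl
  have h0 := mem_image_of_mem V.subtype h0V
  rw [LinearMap.image_convexHull, map_zero] at h0
  refine h0K (convexHull_mono ?_ h0)
  rintro _ ⟨_, ⟨ω, ⟨hωS, hωL⟩, rfl⟩, rfl⟩
  exact ⟨ω, hωS, by simpa using congrArg Subtype.val (hP ⟨f ω, hωL⟩).symm⟩

open scoped Pointwise in
theorem integral_mem_convexHull_image {f : α → E} (hf : Integrable f μ) {S : Set α}
    (hS : S ∈ ae μ) : ∫ ω, f ω ∂μ ∈ convexHull ℝ (f '' S) := by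
  set c := ∫ ω, f ω ∂μ
  have h : (0 : E) ∈ convexHull ℝ ((fun ω => f ω - c) '' S) :=
    zero_mem_convexHull_image_of_integral_eq_zero (hf.sub (integrable_const c))
      (by simp [integral_sub hf (integrable_const c), c]) hS
  have htrans : (fun ω => f ω - c) '' S = (-c) +ᵥ f '' S := by
    rw [← image_vadd, image_image]
    simp [sub_eq_neg_add]
  rw [htrans, convexHull_vadd, mem_vadd_set] at h
  obtain ⟨y, hy, hyc⟩ := h
  rwa [neg_add_eq_zero.mp hyc]

theorem Function.Injective.sum_extend_zero {ι κ M : Type*} [Fintype ι] [Fintype κ]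
    [AddCommMonoid M] {e : ι → κ} (he : Function.Injective e) (g : ι → M) :
    ∑ k, Function.extend e g 0 k = ∑ i, g i := by
  classical
  calc ∑ k, Function.extend e g 0 k = ∑ k ∈ Finset.univ.image e, Function.extend e g 0 k :=
        (Finset.sum_subset (Finset.subset_univ _) fun k _ hk =>
          Function.extend_apply' g (0 : κ → M) k (by simpa using hk)).symm
    _ = ∑ i, g i := by
        rw [Finset.sum_image fun i _ j _ h => he h]
        simp [he.extend_apply]

theorem exists_fin_convexCombination_of_mem_convexHull {s : Set E} {c : E} {d : ℕ}
    (hd : finrank ℝ E ≤ d) (hc : c ∈ convexHull ℝ s) :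
    ∃ (w : Fin (d + 1) → ℝ) (z : Fin (d + 1) → E),
      (∀ k, 0 ≤ w k) ∧ ∑ k, w k = 1 ∧ (∀ k, z k ∈ s) ∧ ∑ k, w k • z k = c := by
  obtain ⟨ι, _, z, w, hzs, hind, hw0, hw1, hwz⟩ := eq_pos_convex_span_of_mem_convexHull hc
  obtain ⟨e⟩ : Nonempty (ι ↪ Fin (d + 1)) := Function.Embedding.nonempty_of_card_le <| by
    have := hind.card_le_finrank_succ
    have := Submodule.finrank_le (vectorSpan ℝ (range z))
    simp only [Fintype.card_fin]
    omega
  obtain ⟨i₀⟩ : Nonempty ι := by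
    by_contra h
    simp [not_nonempty_iff.mp h] at hw1
  have hsmul : ∀ k, Function.extend e w 0 k • Function.extend e z (fun _ => z i₀) k =
      Function.extend e (fun i => w i • z i) 0 k := by
    intro k
    simp only [Function.extend_def]
    split_ifs <;> simp
  refine ⟨Function.extend e w 0, Function.extend e z fun _ => z i₀, fun k => ?_,
    by rw [e.injective.sum_extend_zero, hw1], fun k => ?_,
    by simp only [hsmul, e.injective.sum_extend_zero, hwz]⟩
  · simp only [Function.extend_def]
    split_ifs
    exacts [(hw0 _).le, le_rfl]
  · simp only [Function.extend_def]
    split_ifs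
    exacts [hzs (mem_range_self _), hzs (mem_range_self i₀)]

end ConvexHull

section ExtendHV

variable {n : ℕ} {Ω : Fin n → Type} (j₀ : Fin n)

@[simp]
theorem extendHV_self (ω : Ω j₀) (lam : ∀ j : {j : Fin n // j ≠ j₀}, Ω j.1) :
    extendHV j₀ ω lam j₀ = ω := by
  simp [extendHV]

theorem extendHV_of_ne (ω : Ω j₀) (lam : ∀ j : {j : Fin n // j ≠ j₀}, Ω j.1) {j : Fin n}
    (h : j ≠ j₀) : extendHV j₀ ω lam j = lam ⟨j, h⟩ := by
  simp [extendHV, h]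

variable [∀ j, MeasurableSpace (Ω j)]

theorem measurable_extendHV :
    Measurable (Function.uncurry (extendHV (Ω := Ω) j₀)) := by
  refine measurable_pi_lambda _ fun j => ?_
  simp only [Function.uncurry_def]
  by_cases h : j = j₀
  · subst h
    simpa only [extendHV_self] using measurable_fst
  · simp only [extendHV_of_ne _ _ _ h]
    exact (measurable_pi_apply (⟨j, h⟩ : {j // j ≠ j₀})).comp measurable_snd

variable (ρ : ∀ j, Measure (Ω j)) [∀ j, SigmaFinite (ρ j)]

theorem measurePreserving_extendHV :
    MeasurePreserving (Function.uncurry (extendHV j₀))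
      ((ρ j₀).prod (Measure.pi fun j => ρ j.1)) (Measure.pi ρ) := by
  refine ⟨measurable_extendHV j₀, (Measure.pi_eq fun s hs => ?_).symm⟩
  have hpre : Function.uncurry (extendHV j₀) ⁻¹' univ.pi s =
      s j₀ ×ˢ univ.pi fun j : {j // j ≠ j₀} => s j.1 := by
    ext ⟨ω, lam⟩
    simp only [mem_preimage, mem_univ_pi, mem_prod, Function.uncurry_apply_pair]
    refine ⟨fun h => ⟨by simpa using h j₀, fun j => by simpa [extendHV_of_ne _ _ _ j.2] using h j⟩,
      fun h j => ?_⟩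
    by_cases hj : j = j₀
    · subst hj
      simpa using h.1
    · simpa [extendHV_of_ne _ _ _ hj] using h.2 ⟨j, hj⟩
  rw [Measure.map_apply (measurable_extendHV j₀) (MeasurableSet.univ_pi hs), hpre,
    Measure.prod_prod, Measure.pi_pi, Fintype.prod_eq_mul_prod_subtype_ne _ j₀]

variable {E : Type*} [NormedAddCommGroup E] {F : (∀ j, Ω j) → E}

theorem MeasureTheory.Integrable.comp_extendHV (hF : Integrable F (Measure.pi ρ)) :
    Integrable (F ∘ Function.uncurry (extendHV j₀)) ((ρ j₀).prod (Measure.pi fun j => ρ j.1)) :=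
  (measurePreserving_extendHV j₀ ρ).integrable_comp_of_integrable hF

theorem integral_pi_eq_integral_integral_extendHV [NormedSpace ℝ E]
    (hF : Integrable F (Measure.pi ρ)) :
    ∫ lam, F lam ∂Measure.pi ρ =
      ∫ ω, ∫ lam, F (extendHV j₀ ω lam) ∂Measure.pi (fun j : {j // j ≠ j₀} => ρ j.1) ∂ρ j₀ := by
  have hmp := measurePreserving_extendHV j₀ ρ
  rw [← hmp.map_eq, integral_map hmp.measurable.aemeasurable
    (hmp.map_eq ▸ hF.aestronglyMeasurable)]
  exact integral_prod _ (hF.comp_extendHV j₀ ρ)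

end ExtendHV

section LocalModel

variable {m n : ℕ} {I : Fin m → Fin n → Prop} {X A : Fin m → ℕ} {Ω : Fin n → Type*}
  {R : ∀ i : Fin m, Fin (A i) → Fin (X i) → (∀ j : {j // I i j}, Ω j.1) → ℝ}

theorem norm_prod_response_le_one (hRpos : ∀ i a x lam, 0 ≤ R i a x lam)
    (hRnorm : ∀ i x lam, ∑ a, R i a x lam = 1) (a : ∀ i, Fin (A i)) (x : ∀ i, Fin (X i))
    (lam : ∀ j, Ω j) : ‖∏ i, R i (a i) (x i) (fun j => lam j.1)‖ ≤ 1 := by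
  have hle : ∀ i, R i (a i) (x i) (fun j => lam j.1) ≤ 1 := fun i =>
    hRnorm i (x i) _ ▸ Finset.single_le_sum (fun a' _ => hRpos i a' (x i) _) (Finset.mem_univ _)
  rw [Real.norm_of_nonneg (Finset.prod_nonneg fun i _ => hRpos _ _ _ _)]
  exact Finset.prod_le_one (fun i _ => hRpos _ _ _ _) fun i _ => hle i

theorem integrable_prod_response [∀ j, MeasurableSpace (Ω j)]
    (hRmeas : ∀ i a x, Measurable (R i a x)) (hRpos : ∀ i a x lam, 0 ≤ R i a x lam)
    (hRnorm : ∀ i x lam, ∑ a, R i a x lam = 1) {β : Type*} [MeasurableSpace β] {ν : Measure β}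
    [IsFiniteMeasure ν] {g : β → ∀ j, Ω j} (hg : Measurable g) (a : ∀ i, Fin (A i))
    (x : ∀ i, Fin (X i)) : Integrable (fun b => ∏ i, R i (a i) (x i) (fun j => g b j.1)) ν := by
  have hmeas : Measurable fun b => ∏ i, R i (a i) (x i) (fun j => g b j.1) :=
    Finset.measurable_prod _ fun i _ => (hRmeas i (a i) (x i)).comp
      (measurable_pi_lambda _ fun j => (measurable_pi_apply j.1).comp hg)
  exact Integrable.of_bound hmeas.aestronglyMeasurable 1
    (ae_of_all _ fun b => norm_prod_response_le_one hRpos hRnorm a x (g b))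

end LocalModel

theorem cardinality_bound_general
    {m n : ℕ} (hn : 1 ≤ n)
    (I : Fin m → Fin n → Prop)
    (X A : Fin m → ℕ)
    (Ω : Fin n → Type) [∀ j, MeasurableSpace (Ω j)]
    (ρ : ∀ j, Measure (Ω j)) [∀ j, IsProbabilityMeasure (ρ j)]
    (R : ∀ i : Fin m, Fin (A i) → Fin (X i) → (∀ j : {j // I i j}, Ω j.1) → ℝ)
    (hRmeas : ∀ i a x, Measurable (R i a x))
    (hRpos : ∀ i a x lam, 0 ≤ R i a x lam)
    (hRnorm : ∀ i x lam, ∑ a, R i a x lam = 1)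
    (P : (∀ i, Fin (A i)) → (∀ i, Fin (X i)) → ℝ)
    (hP : ∀ a x, P a x =
      ∫ lam : ∀ j, Ω j, ∏ i, R i (a i) (x i) (fun j => lam j.1) ∂ Measure.pi ρ)
    (d : ℕ) (hd : d = (∏ i, A i) * (∏ i, X i)) :
    ∃ (w : Fin (d + 1) → ℝ) (μ : Fin (d + 1) → Ω ⟨0, hn⟩),
      (∀ k, 0 ≤ w k) ∧ (∑ k, w k = 1) ∧
      ∀ a x, P a x = ∑ k, w k *
        ∫ lam : ∀ j : {j : Fin n // j ≠ ⟨0, hn⟩}, Ω j.1,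
          ∏ i, R i (a i) (x i) (fun j => extendHV ⟨0, hn⟩ (μ k) lam j.1)
          ∂ Measure.pi (fun j : {j : Fin n // j ≠ ⟨0, hn⟩} => ρ j.1) := by
  set j₀ : Fin n := ⟨0, hn⟩
  let F : (∀ j, Ω j) → ((∀ i, Fin (A i)) × (∀ i, Fin (X i)) → ℝ) := fun lam ax =>
    ∏ i, R i (ax.1 i) (ax.2 i) (fun j => lam j.1)
  have hF : Integrable F (Measure.pi ρ) := Integrable.of_eval fun ax =>
    integrable_prod_response hRmeas hRpos hRnorm measurable_id ax.1 ax.2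
  let G : Ω j₀ → ((∀ i, Fin (A i)) × (∀ i, Fin (X i)) → ℝ) := fun ω =>
    ∫ lam, F (extendHV j₀ ω lam) ∂Measure.pi fun j : {j // j ≠ j₀} => ρ j.1
  have hG : Integrable G (ρ j₀) := (hF.comp_extendHV j₀ ρ).integral_prod_left
  have hGeval : ∀ ω a x, G ω (a, x) = ∫ lam, ∏ i, R i (a i) (x i)
      (fun j => extendHV j₀ ω lam j.1) ∂Measure.pi fun j : {j // j ≠ j₀} => ρ j.1 :=
    fun ω a x => eval_integral (fun ax => integrable_prod_response hRmeas hRpos hRnorm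
      ((measurable_extendHV j₀).comp measurable_prodMk_left) ax.1 ax.2) (a, x)
  have hPG : ∀ a x, P a x = (∫ ω, G ω ∂ρ j₀) (a, x) := fun a x => by
    rw [hP, ← integral_pi_eq_integral_integral_extendHV j₀ ρ hF,
      eval_integral (fun ax => hF.eval ax) (a, x)]
  have hdim : finrank ℝ ((∀ i, Fin (A i)) × (∀ i, Fin (X i)) → ℝ) ≤ d := by
    simp [hd, Module.finrank_fintype_fun_eq_card]
  obtain ⟨w, z, hw0, hw1, hzG, hwz⟩ := exists_fin_convexCombination_of_mem_convexHull hdim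
    (by simpa using integral_mem_convexHull_image hG univ_mem)
  choose μ hμ using hzG
  refine ⟨w, μ, hw0, hw1, fun a x => ?_⟩
  simp only [hPG, ← hwz, Finset.sum_apply, Pi.smul_apply, smul_eq_mul, ← hμ, hGeval]

/-- **Proposition 2 (cardinality bound).** Any network-local behavior `P`,
realized by a local model with hidden-variable spaces `Ω j`, can be reproduced
by a model in which the first source is replaced by a discrete source taking at
most `d + 1` values (`d = ∏ A i · ∏ X i`), all other sources and all response
functions being unchanged. -/
theorem cardinality_bound
    {m n : ℕ} (hm : 1 ≤ m) (hn : 1 ≤ n)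
    (I : Fin m → Fin n → Prop) [∀ i j, Decidable (I i j)]
    (X A : Fin m → ℕ) (hX : ∀ i, 1 ≤ X i) (hA : ∀ i, 1 ≤ A i)
    (Ω : Fin n → Type) [∀ j, MeasurableSpace (Ω j)]
    (ρ : ∀ j, Measure (Ω j)) [∀ j, IsProbabilityMeasure (ρ j)]
    (R : ∀ i : Fin m, Fin (A i) → Fin (X i) → (∀ j : {j // I i j}, Ω j.1) → ℝ)
    (hRmeas : ∀ i a x, Measurable (R i a x))
    (hRpos : ∀ i a x lam, 0 ≤ R i a x lam)
    (hRnorm : ∀ i x lam, ∑ a, R i a x lam = 1)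
    (P : (∀ i, Fin (A i)) → (∀ i, Fin (X i)) → ℝ)
    (hP : ∀ a x, P a x =
      ∫ lam : ∀ j, Ω j, ∏ i, R i (a i) (x i) (fun j => lam j.1) ∂ Measure.pi ρ)
    (d : ℕ) (hd : d = (∏ i, A i) * (∏ i, X i)) :
    ∃ (w : Fin (d + 1) → ℝ) (μ : Fin (d + 1) → Ω ⟨0, hn⟩),
      (∀ k, 0 ≤ w k) ∧ (∑ k, w k = 1) ∧
      ∀ a x, P a x = ∑ k, w k *
        ∫ lam : ∀ j : {j : Fin n // j ≠ ⟨0, hn⟩}, Ω j.1,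
          ∏ i, R i (a i) (x i) (fun j => extendHV ⟨0, hn⟩ (μ k) lam j.1)
          ∂ Measure.pi (fun j : {j : Fin n // j ≠ ⟨0, hn⟩} => ρ j.1) :=
  cardinality_bound_general hn I X A Ω ρ R hRmeas hRpos hRnorm P hP d hd
end

section
/- Let X ⊆ ℝ^d be a bounded set (not necessarily closed), and let ρ be a Borel probability measure on ℝ^d concentrated on X (ρ(X) = 1, or equivalently the complement of X is ρ-null). Then the barycenter x* = ∫ x dρ(x) can be written as a convex combination of at most d+1 points of X: there exist k ≤ d+1 points x_1, …, x_k ∈ X and weights w_1, …, w_k ≥ 0 with Σ_i w_i = 1 such that x* = Σ_i w_i x_i. In particular the barycenter lies in the convex hull of X (not merely in its closure). -/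
/-!
The barycenter `b` of `ρ` lies in the (closed) affine span of `X`. If it were not in the convex
hull, a functional `f` separating `b` from the hull properly, i.e. within the affine span, would
satisfy `f b ≤ f` on `X`, with equality on average; so `ρ` is concentrated on the slice
`X ∩ {f = f b}`, whose affine span has smaller dimension, and induction on that dimension applies.
Carathéodory's theorem then bounds the number of points by `d + 1`.
-/

open MeasureTheory Module

theorem exists_fin_convex_combination_of_mem_convexHull {𝕜 E : Type*} [Field 𝕜] [LinearOrder 𝕜]
    [IsStrictOrderedRing 𝕜] [AddCommGroup E] [Module 𝕜 E] [FiniteDimensional 𝕜 E]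
    {s : Set E} {x : E} (hx : x ∈ convexHull 𝕜 s) :
    ∃ (k : ℕ) (_ : k ≤ finrank 𝕜 E + 1) (z : Fin k → E) (w : Fin k → 𝕜),
      (∀ i, z i ∈ s) ∧ (∀ i, 0 ≤ w i) ∧ (∑ i, w i = 1) ∧ x = ∑ i, w i • z i := by
  obtain ⟨ι, _, z, w, hzs, hz, hw0, hw1, hwz⟩ := eq_pos_convex_span_of_mem_convexHull hx
  let e := Fintype.equivFin ι
  have hcard : Fintype.card ι ≤ finrank 𝕜 E + 1 :=
    hz.card_le_finrank_succ.trans (Nat.add_le_add_right (Submodule.finrank_le _) 1)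
  refine ⟨Fintype.card ι, hcard, z ∘ e.symm, w ∘ e.symm, fun i => hzs ⟨_, rfl⟩,
    fun i => (hw0 _).le, ?_, ?_⟩
  · rw [← hw1]; exact e.symm.sum_comp w
  · rw [← hwz]; exact (e.symm.sum_comp fun i => w i • z i).symm

variable {α E : Type*} {m : MeasurableSpace α} {μ : Measure α} [IsProbabilityMeasure μ]
  [NormedAddCommGroup E] [NormedSpace ℝ E]

theorem ae_apply_eq_apply_integral_of_ae_le [CompleteSpace E] {φ : α → E} (hφ : Integrable φ μ)
    (f : StrongDual ℝ E) (h : ∀ᵐ x ∂μ, f (∫ y, φ y ∂μ) ≤ f (φ x)) :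
    ∀ᵐ x ∂μ, f (φ x) = f (∫ y, φ y ∂μ) := by
  have := (integral_eq_iff_of_ae_le (integrable_const _) (f.integrable_comp hφ) h).mp
    (by simp [f.integral_comp_comm hφ])
  exact this.mono fun x hx => hx.symm

variable [FiniteDimensional ℝ E]

theorem Convex.exists_forall_le_and_exists_lt_of_mem_affineSpan {C : Set E} (hC : Convex ℝ C)
    {x : E} (hxA : x ∈ affineSpan ℝ C) (hxC : x ∉ C) :
    ∃ f : StrongDual ℝ E, (∀ a ∈ C, f x ≤ f a) ∧ ∃ a ∈ C, f x < f a := by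
  have : Nonempty C := ((affineSpan_nonempty (k := ℝ)).mp ⟨x, hxA⟩).to_subtype
  set A := affineSpan ℝ C
  -- Separate `0` from `x - C` inside the direction of `A`, where it has nonempty interior.
  set C' : Set A.direction := {c | x - c ∈ C}
  let φ := (AffineIsometryEquiv.constVSub ℝ (⟨x, hxA⟩ : A)).symm.toAffineEquiv
  have hC'φ : C' = φ ⁻¹' ((↑) ⁻¹' C) := by
    ext c
    simp [C', φ, neg_add_eq_sub]
  have hC' : Convex ℝ C' := hC'φ ▸ hC.affine_preimage (A.subtype.comp φ.toAffineMap)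
  have hint : (interior C').Nonempty := by
    rw [hC'.interior_nonempty_iff_affineSpan_eq_top, hC'φ, ← AffineSubspace.comap_span,
      affineSpan_coe_preimage_eq_top, AffineSubspace.comap_top]
  have h0 : (0 : A.direction) ∉ interior C' := fun h =>
    hxC (by simpa [C'] using interior_subset h)
  obtain ⟨g, hg0, hg⟩ := geometric_hahn_banach_of_nonempty_interior_point hC' h0 hint
  obtain ⟨f, hfg, -⟩ := exists_extension_norm_eq A.direction g
  have hfC' : ∀ c ∈ C', f c ≤ 0 := fun c hc => by simpa [hfg] using hg c hc
  have hmin : ∀ a ∈ C, f x ≤ f a := fun a ha => by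
    have := hfC' ⟨x - a, AffineSubspace.vsub_mem_direction hxA (subset_affineSpan ℝ C ha)⟩
      (by simpa [C'] using ha)
    simpa using this
  refine ⟨f, hmin, ?_⟩
  by_contra! hmax
  refine hg0 (ContinuousLinearMap.coe_injective (LinearMap.ker_eq_top.mp
    (Submodule.eq_top_of_nonempty_interior' (R := ℝ)
      (LinearMap.ker (g : A.direction →ₗ[ℝ] ℝ)) ?_)))
  refine hint.mono (interior_mono fun c hc => ?_)
  have h1 := hmin _ hc
  have h2 := hmax _ hc
  simp only [map_sub] at h1 h2
  simp only [SetLike.mem_coe, LinearMap.mem_ker, ContinuousLinearMap.coe_coe, ← hfg]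
  linarith

theorem integral_mem_convexHull {s : Set E} {φ : α → E} (hs : ∀ᵐ x ∂μ, φ x ∈ s)
    (hφ : Integrable φ μ) : ∫ x, φ x ∂μ ∈ convexHull ℝ s := by
  induction hn : finrank ℝ (vectorSpan ℝ s) using Nat.strong_induction_on generalizing s with
  | _ n ih =>
  set b := ∫ x, φ x ∂μ
  by_contra hb
  have hbA : b ∈ affineSpan ℝ s :=
    (affineSpan ℝ s).convex.integral_mem (affineSpan ℝ s).closed_of_finiteDimensional
      (hs.mono fun x hx => subset_affineSpan ℝ s hx) hφ
  obtain ⟨f, hmin, y, hy, hlt⟩ :=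
    (convex_convexHull ℝ s).exists_forall_le_and_exists_lt_of_mem_affineSpan
      (by rwa [affineSpan_convexHull]) hb
  have hlevel : ∀ᵐ x ∂μ, f (φ x) = f b :=
    ae_apply_eq_apply_integral_of_ae_le hφ f
      (hs.mono fun x hx => hmin _ (subset_convexHull ℝ s hx))
  set s' := s ∩ {z | f z = f b}
  have hlt' : finrank ℝ (vectorSpan ℝ s') < n := by
    rw [← hn]
    refine Submodule.finrank_lt_finrank_of_lt
      (lt_of_le_of_ne (vectorSpan_mono ℝ Set.inter_subset_left) fun heq => ?_)
    have hker : vectorSpan ℝ s' ≤ LinearMap.ker (f : E →ₗ[ℝ] ℝ) := by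
      rw [vectorSpan_def, Submodule.span_le]
      rintro _ ⟨p, ⟨-, hp : f p = f b⟩, q, ⟨-, hq : f q = f b⟩, rfl⟩
      simp [hp, hq]
    have hyb : y - b ∈ vectorSpan ℝ s := by
      rw [← direction_affineSpan]
      exact AffineSubspace.vsub_mem_direction (convexHull_subset_affineSpan s hy) hbA
    have hyb' := hker (heq ▸ hyb)
    rw [LinearMap.mem_ker, ContinuousLinearMap.coe_coe, map_sub, sub_eq_zero] at hyb'
    exact hlt.ne' hyb'
  exact hb (convexHull_mono Set.inter_subset_left (ih _ hlt' (hs.and hlevel) rfl))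

/-- **Carathéodory's theorem for barycenters of bounded (not necessarily
closed) sets.** If `X ⊆ ℝ^d` is bounded and `ρ` is a Borel probability measure
concentrated on `X`, then the barycenter `∫ x dρ(x)` is a convex combination of
at most `d + 1` points of `X`; in particular it lies in the convex hull of `X`
(not merely its closure). -/
theorem barycenter_caratheodory
    (d : ℕ) (X : Set (EuclideanSpace ℝ (Fin d)))
    (hX : Bornology.IsBounded X)
    (ρ : Measure (EuclideanSpace ℝ (Fin d))) [IsProbabilityMeasure ρ]
    (hρ : ρ Xᶜ = 0) :
    ∃ (k : ℕ) (_ : k ≤ d + 1)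
      (x : Fin k → EuclideanSpace ℝ (Fin d)) (w : Fin k → ℝ),
      (∀ i, x i ∈ X) ∧ (∀ i, 0 ≤ w i) ∧ (∑ i, w i = 1) ∧
      (∫ y, y ∂ρ) = ∑ i, w i • x i := by
  have hae : ∀ᵐ y ∂ρ, y ∈ X := mem_ae_iff.mpr hρ
  obtain ⟨R, hR⟩ := hX.exists_norm_le
  have hint : Integrable (fun y => y) ρ :=
    Integrable.of_bound aestronglyMeasurable_id R (hae.mono hR)
  have hmem := integral_mem_convexHull hae hint
  simpa only [finrank_euclideanSpace_fin] using
    exists_fin_convex_combination_of_mem_convexHull hmem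
end

section
/- The behavior P_≠ on Fin 2 × Fin 2 × Fin 2, defined by P_≠(a,b,c) = 0 if a = b = c and P_≠(a,b,c) = 1/6 otherwise, has no symmetric finite Δ-local model: for every u ≥ 1, every probability distribution p : Fin u → ℝ (p ≥ 0, Σ p = 1), and every response function R : Fin 2 → Fin u → Fin u → ℝ with R ≥ 0 and R 0 β γ + R 1 β γ = 1 for all β, γ, the distribution Q(a,b,c) = Σ_{α,β,γ ∈ Fin u} p α · p β · p γ · R a β γ · R b γ α · R c α β satisfies Q(0,0,0) > 0 or Q(1,1,1) > 0; in particular Q ≠ P_≠. -/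
lemma triple_sum_zero {u : ℕ} (f : Fin u → Fin u → Fin u → ℝ)
    (hf : ∀ α β γ, 0 ≤ f α β γ)
    (h : ∑ α : Fin u, ∑ β : Fin u, ∑ γ : Fin u, f α β γ = 0) :
    ∀ α β γ, f α β γ = 0 := by
  intro α β γ
  have h1 : ∀ a ∈ Finset.univ, (0:ℝ) ≤ ∑ β : Fin u, ∑ γ : Fin u, f a β γ := by
    intro a _
    exact Finset.sum_nonneg fun b _ => Finset.sum_nonneg fun c _ => hf a b c
  have h2 := (Finset.sum_eq_zero_iff_of_nonneg h1).mp h α (Finset.mem_univ α)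
  have h3 : ∀ b ∈ Finset.univ, (0:ℝ) ≤ ∑ γ : Fin u, f α b γ := by
    intro b _; exact Finset.sum_nonneg fun c _ => hf α b c
  have h4 := (Finset.sum_eq_zero_iff_of_nonneg h3).mp h2 β (Finset.mem_univ β)
  have h5 : ∀ c ∈ Finset.univ, (0:ℝ) ≤ f α β c := fun c _ => hf α β c
  exact (Finset.sum_eq_zero_iff_of_nonneg h5).mp h4 γ (Finset.mem_univ γ)

/-- **No symmetric finite Δ-local model for `P_≠`.** For every symmetric finite
Δ-local model (same source distribution `p` and same response function `R` for
all three parties), the resulting behavior `Q` has `Q(0,0,0) > 0` or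
`Q(1,1,1) > 0`; in particular `Q ≠ P_≠`, where `P_≠(a,b,c)` is `0` if
`a = b = c` and `1/6` otherwise. -/
theorem no_symmetric_finite_model
    (u : ℕ) (hu : 1 ≤ u)
    (p : Fin u → ℝ) (hp : ∀ α, 0 ≤ p α) (hpsum : ∑ α, p α = 1)
    (R : Fin 2 → Fin u → Fin u → ℝ)
    (hR : ∀ a β γ, 0 ≤ R a β γ)
    (hRnorm : ∀ β γ, R 0 β γ + R 1 β γ = 1)
    (Q : Fin 2 → Fin 2 → Fin 2 → ℝ)
    (hQ : ∀ a b c, Q a b c = ∑ α : Fin u, ∑ β : Fin u, ∑ γ : Fin u,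
      p α * p β * p γ * R a β γ * R b γ α * R c α β) :
    (0 < Q 0 0 0 ∨ 0 < Q 1 1 1) ∧
      Q ≠ fun a b c => if a = b ∧ b = c then (0 : ℝ) else 1 / 6 := by
  -- there is α₀ with p α₀ > 0
  obtain ⟨α₀, hα₀⟩ : ∃ α, 0 < p α := by
    by_contra h
    push_neg at h
    have : ∀ α ∈ Finset.univ, p α = 0 := fun α _ => le_antisymm (h α) (hp α)
    rw [Finset.sum_eq_zero this] at hpsum
    norm_num at hpsum
  have hterm : ∀ a b c (α β γ : Fin u),
      0 ≤ p α * p β * p γ * R a β γ * R b γ α * R c α β := by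
    intro a b c α β γ
    have := hp α; have := hp β; have := hp γ
    have := hR a β γ; have := hR b γ α; have := hR c α β
    positivity
  have key : 0 < Q 0 0 0 ∨ 0 < Q 1 1 1 := by
    by_contra h
    push_neg at h
    obtain ⟨h0, h1⟩ := h
    have hz : ∀ a : Fin 2, Q a a a ≤ 0 → R a α₀ α₀ = 0 := by
      intro a hQa
      have hnn : 0 ≤ Q a a a := by
        rw [hQ]
        exact Finset.sum_nonneg fun α _ => Finset.sum_nonneg fun β _ =>
          Finset.sum_nonneg fun γ _ => hterm a a a α β γ
      have hQ0 : (∑ α : Fin u, ∑ β : Fin u, ∑ γ : Fin u,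
          p α * p β * p γ * R a β γ * R a γ α * R a α β) = 0 := by
        rw [← hQ]; linarith
      have := triple_sum_zero _ (fun α β γ => hterm a a a α β γ) hQ0 α₀ α₀ α₀
      have hcube : (p α₀)^3 * (R a α₀ α₀)^3 = 0 := by nlinarith [this]
      have : (R a α₀ α₀)^3 = 0 := by
        have hp3 : (0:ℝ) < (p α₀)^3 := by positivity
        exact (mul_eq_zero.mp hcube).resolve_left (ne_of_gt hp3)
      exact pow_eq_zero_iff (n := 3) (by norm_num) |>.mp this
    have e0 := hz 0 h0
    have e1 := hz 1 h1
    have := hRnorm α₀ α₀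
    rw [e0, e1] at this
    norm_num at this
  refine ⟨key, ?_⟩
  intro heq
  rcases key with hk | hk
  · have : Q 0 0 0 = 0 := by rw [heq]; norm_num
    linarith
  · have : Q 1 1 1 = 0 := by rw [heq]; norm_num
    linarith
end

section
/- The perfectly correlated behavior P_= on Fin 2 × Fin 2 × Fin 2, defined by P_=(0,0,0) = P_=(1,1,1) = 1/2 and P_=(a,b,c) = 0 otherwise, admits no finite Δ-local model: for all finite types Ω_α, Ω_β, Ω_γ, all probability distributions p, q, r on them, and all response functions R_A : Fin 2 → Ω_β → Ω_γ → ℝ, R_B : Fin 2 → Ω_γ → Ω_α → ℝ, R_C : Fin 2 → Ω_α → Ω_β → ℝ (nonnegative, summing to 1 over the output argument), the distribution Q(a,b,c) = Σ_{α,β,γ} p(α) q(β) r(γ) R_A(a|β,γ) R_B(b|γ,α) R_C(c|α,β) is not equal to P_=. -/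
lemma sum3_eq_zero {A B C : Type} [Fintype A] [Fintype B] [Fintype C]
    (f : A → B → C → ℝ) (hf : ∀ a b c, 0 ≤ f a b c)
    (h : ∑ a, ∑ b, ∑ c, f a b c = 0) (a : A) (b : B) (c : C) : f a b c = 0 := by
  have h1 := (Finset.sum_eq_zero_iff_of_nonneg (fun a _ =>
    Finset.sum_nonneg fun b _ => Finset.sum_nonneg fun c _ => hf a b c)).mp h a (Finset.mem_univ a)
  have h2 := (Finset.sum_eq_zero_iff_of_nonneg (fun b _ =>
    Finset.sum_nonneg fun c _ => hf a b c)).mp h1 b (Finset.mem_univ b)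
  exact (Finset.sum_eq_zero_iff_of_nonneg (fun c _ => hf a b c)).mp h2 c (Finset.mem_univ c)

lemma triangle_pointwise (x y z : ℝ) (hx0 : 0 ≤ x)
    (h001 : x * y * (1 - z) = 0) (h010 : x * (1 - y) * z = 0)
    (h011 : x * (1 - y) * (1 - z) = 0) (h100 : (1 - x) * y * z = 0)
    (h101 : (1 - x) * y * (1 - z) = 0) (h110 : (1 - x) * (1 - y) * z = 0) :
    (x = 0 ∧ y = 0 ∧ z = 0) ∨ (x = 1 ∧ y = 1 ∧ z = 1) := by
  have hx : x = x * y * z := by linear_combination h001 + h010 + h011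
  have hy : y = x * y * z := by linear_combination h100 + h001 + h101
  have hz : z = x * y * z := by linear_combination h010 + h100 + h110
  have hxy : x = y := by linarith
  have hxz : x = z := by linarith
  rw [← hxy, ← hxz] at hx
  have h3 : x * ((1 - x) * (1 + x)) = 0 := by linear_combination hx
  rcases mul_eq_zero.mp h3 with h | h
  · exact Or.inl ⟨h, by linarith, by linarith⟩
  · rcases mul_eq_zero.mp h with h | h
    · exact Or.inr ⟨by linarith, by linarith, by linarith⟩
    · exact absurd hx0 (by intro _; linarith)

/-- **`P_=` has no finite Δ-local model.** The perfectly correlated behavior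
`P_=(0,0,0) = P_=(1,1,1) = 1/2` (and `0` otherwise) cannot be reproduced by any
finite Δ-local model. -/
theorem perfectly_correlated_not_triangle_local
    (Ωα Ωβ Ωγ : Type) [Fintype Ωα] [Fintype Ωβ] [Fintype Ωγ]
    (p : Ωα → ℝ) (q : Ωβ → ℝ) (r : Ωγ → ℝ)
    (hp : ∀ α, 0 ≤ p α) (hpsum : ∑ α, p α = 1)
    (hq : ∀ β, 0 ≤ q β) (hqsum : ∑ β, q β = 1)
    (hr : ∀ γ, 0 ≤ r γ) (hrsum : ∑ γ, r γ = 1)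
    (RA : Fin 2 → Ωβ → Ωγ → ℝ) (RB : Fin 2 → Ωγ → Ωα → ℝ) (RC : Fin 2 → Ωα → Ωβ → ℝ)
    (hRApos : ∀ a β γ, 0 ≤ RA a β γ) (hRBpos : ∀ b γ α, 0 ≤ RB b γ α)
    (hRCpos : ∀ c α β, 0 ≤ RC c α β)
    (hRAnorm : ∀ β γ, ∑ a, RA a β γ = 1) (hRBnorm : ∀ γ α, ∑ b, RB b γ α = 1)
    (hRCnorm : ∀ α β, ∑ c, RC c α β = 1) :
    (fun (a b c : Fin 2) => ∑ α : Ωα, ∑ β : Ωβ, ∑ γ : Ωγ,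
        p α * q β * r γ * RA a β γ * RB b γ α * RC c α β) ≠
      fun a b c => if a = b ∧ b = c then (1 : ℝ) / 2 else 0 := by
  intro h
  have hQ : ∀ a b c : Fin 2,
      (∑ α : Ωα, ∑ β : Ωβ, ∑ γ : Ωγ,
        p α * q β * r γ * RA a β γ * RB b γ α * RC c α β) =
      if a = b ∧ b = c then (1 : ℝ) / 2 else 0 :=
    fun a b c => congrFun (congrFun (congrFun h a) b) c
  have hA1 : ∀ β γ, RA 1 β γ = 1 - RA 0 β γ := by
    intro β γ; have := hRAnorm β γ; rw [Fin.sum_univ_two] at this; linarith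
  have hB1 : ∀ γ α, RB 1 γ α = 1 - RB 0 γ α := by
    intro γ α; have := hRBnorm γ α; rw [Fin.sum_univ_two] at this; linarith
  have hC1 : ∀ α β, RC 1 α β = 1 - RC 0 α β := by
    intro α β; have := hRCnorm α β; rw [Fin.sum_univ_two] at this; linarith
  have key : ∀ (α : Ωα) (β : Ωβ) (γ : Ωγ), p α ≠ 0 → q β ≠ 0 → r γ ≠ 0 →
      (RA 0 β γ = 0 ∧ RB 0 γ α = 0 ∧ RC 0 α β = 0) ∨
      (RA 0 β γ = 1 ∧ RB 0 γ α = 1 ∧ RC 0 α β = 1) := by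
    intro α β γ hα hβ hγ
    have hzero : ∀ a b c : Fin 2, ¬(a = b ∧ b = c) →
        RA a β γ * RB b γ α * RC c α β = 0 := by
      intro a b c habc
      have hs : ∑ α' : Ωα, ∑ β' : Ωβ, ∑ γ' : Ωγ,
          p α' * q β' * r γ' * RA a β' γ' * RB b γ' α' * RC c α' β' = 0 := by
        rw [hQ a b c, if_neg habc]
      have h0 := sum3_eq_zero _ (fun α' β' γ' =>
        mul_nonneg (mul_nonneg (mul_nonneg (mul_nonneg (mul_nonneg (hp α') (hq β')) (hr γ'))
          (hRApos a β' γ')) (hRBpos b γ' α')) (hRCpos c α' β')) hs α β γ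
      have h' : p α * q β * r γ * (RA a β γ * RB b γ α * RC c α β) = 0 := by
        linear_combination h0
      exact (mul_eq_zero.mp h').resolve_left (mul_ne_zero (mul_ne_zero hα hβ) hγ)
    have e001 := hzero 0 0 1 (by decide)
    have e010 := hzero 0 1 0 (by decide)
    have e011 := hzero 0 1 1 (by decide)
    have e100 := hzero 1 0 0 (by decide)
    have e101 := hzero 1 0 1 (by decide)
    have e110 := hzero 1 1 0 (by decide)
    rw [hC1] at e001 e011 e101
    rw [hB1] at e010 e011 e110
    rw [hA1] at e100 e101 e110
    exact triangle_pointwise _ _ _ (hRApos 0 β γ) e001 e010 e011 e100 e101 e110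
  obtain ⟨α0, hα0⟩ : ∃ α, p α ≠ 0 := by
    by_contra hc; push_neg at hc
    rw [Finset.sum_eq_zero (fun α _ => hc α)] at hpsum; norm_num at hpsum
  obtain ⟨β0, hβ0⟩ : ∃ β, q β ≠ 0 := by
    by_contra hc; push_neg at hc
    rw [Finset.sum_eq_zero (fun β _ => hc β)] at hqsum; norm_num at hqsum
  obtain ⟨γ0, hγ0⟩ : ∃ γ, r γ ≠ 0 := by
    by_contra hc; push_neg at hc
    rw [Finset.sum_eq_zero (fun γ _ => hc γ)] at hrsum; norm_num at hrsum
  set t : ℝ := RA 0 β0 γ0 with ht_def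
  have keq : ∀ (α : Ωα) (β : Ωβ) (γ : Ωγ), p α ≠ 0 → q β ≠ 0 → r γ ≠ 0 →
      RA 0 β γ = RB 0 γ α ∧ RB 0 γ α = RC 0 α β := by
    intro α β γ hα hβ hγ
    rcases key α β γ hα hβ hγ with ⟨h1, h2, h3⟩ | ⟨h1, h2, h3⟩ <;> rw [h1, h2, h3] <;>
      exact ⟨rfl, rfl⟩
  have ht : t = 0 ∨ t = 1 := by
    rcases key α0 β0 γ0 hα0 hβ0 hγ0 with ⟨h1, _, _⟩ | ⟨h1, _, _⟩
    · exact Or.inl h1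
    · exact Or.inr h1
  have hconst : ∀ (α : Ωα) (β : Ωβ) (γ : Ωγ), p α ≠ 0 → q β ≠ 0 → r γ ≠ 0 →
      RA 0 β γ = t ∧ RB 0 γ α = t ∧ RC 0 α β = t := by
    intro α β γ hα hβ hγ
    have s1 := keq α β γ hα hβ hγ
    have s2 := keq α β γ0 hα hβ hγ0
    have s3 := keq α β0 γ0 hα hβ0 hγ0
    have s4 := keq α0 β0 γ hα0 hβ0 hγ
    have s5 := keq α0 β0 γ0 hα0 hβ0 hγ0
    have s6 := keq α0 β γ0 hα0 hβ hγ0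
    -- RA 0 β γ = RC 0 α β (s1) = RB 0 γ0 α (s2) = RA 0 β0 γ0 = t (s3)
    have hA : RA 0 β γ = t := by
      have := s1.1.trans s1.2
      have := s2.2
      have := s3.1
      rw [ht_def]; linarith [s1.1, s1.2, s2.2, s3.1]
    have hB : RB 0 γ α = t := by
      rw [ht_def]; linarith [s3.1, s3.2, s2.2, (keq α β0 γ hα hβ0 hγ).1,
        s4.1, s5.1, s5.2]
    have hC : RC 0 α β = t := by
      rw [ht_def]; linarith [s1.1, s1.2, hA]
    exact ⟨hA, hB, hC⟩
  have hpt : ∀ (α : Ωα) (β : Ωβ) (γ : Ωγ),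
      p α * q β * r γ * RA 0 β γ * RB 0 γ α * RC 0 α β = p α * q β * r γ * t := by
    intro α β γ
    by_cases hα : p α = 0
    · simp [hα]
    by_cases hβ : q β = 0
    · simp [hβ]
    by_cases hγ : r γ = 0
    · simp [hγ]
    obtain ⟨e1, e2, e3⟩ := hconst α β γ hα hβ hγ
    rw [e1, e2, e3]
    rcases ht with h | h <;> rw [h] <;> ring
  have hsum : ∑ α : Ωα, ∑ β : Ωβ, ∑ γ : Ωγ,
      p α * q β * r γ * RA 0 β γ * RB 0 γ α * RC 0 α β = t := by
    calc ∑ α : Ωα, ∑ β : Ωβ, ∑ γ : Ωγ,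
          p α * q β * r γ * RA 0 β γ * RB 0 γ α * RC 0 α β
        = ∑ α : Ωα, ∑ β : Ωβ, ∑ γ : Ωγ, p α * q β * r γ * t := by
          exact Finset.sum_congr rfl fun α _ => Finset.sum_congr rfl fun β _ =>
            Finset.sum_congr rfl fun γ _ => hpt α β γ
      _ = ∑ α : Ωα, ∑ β : Ωβ, p α * q β * t := by
          refine Finset.sum_congr rfl fun α _ => Finset.sum_congr rfl fun β _ => ?_
          calc ∑ γ : Ωγ, p α * q β * r γ * t
              = (p α * q β * t) * ∑ γ : Ωγ, r γ := by
                rw [Finset.mul_sum]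
                exact Finset.sum_congr rfl fun γ _ => by ring
            _ = p α * q β * t := by rw [hrsum, mul_one]
      _ = ∑ α : Ωα, p α * t := by
          refine Finset.sum_congr rfl fun α _ => ?_
          calc ∑ β : Ωβ, p α * q β * t = (p α * t) * ∑ β : Ωβ, q β := by
                rw [Finset.mul_sum]
                exact Finset.sum_congr rfl fun β _ => by ring
            _ = p α * t := by rw [hqsum, mul_one]
      _ = t := by rw [← Finset.sum_mul, hpsum, one_mul]
  have h000 := hQ 0 0 0
  rw [if_pos ⟨rfl, rfl⟩] at h000
  rw [hsum] at h000
  rcases ht with h' | h' <;> rw [h'] at h000 <;> norm_num at h000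
end

section
/- For any network and any fixed cardinality vector c : Fin n → ℕ with c j ≥ 1, the finite-cardinality network-local set L_c — the set of all behaviors P : (Π i, Fin (A i)) → (Π i, Fin (X i)) → ℝ of the form P(ā|x̄) = Σ_{λ ∈ Π_j Fin (c j)} Π_j p_j(λ_j) · Π_i R_i (a_i)(x_i)(λ_{[i]}) for some discrete probability distributions p_j on Fin (c j) and valid response functions R_i — is a compact subset of the (finite-dimensional) space of all functions (Π i, Fin (A i)) → (Π i, Fin (X i)) → ℝ. -/
def finiteLocalSet {m n : ℕ} (I : Fin m → Fin n → Prop) [∀ i j, Decidable (I i j)]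
    (X A : Fin m → ℕ) (c : Fin n → ℕ) :
    Set ((∀ i, Fin (A i)) → (∀ i, Fin (X i)) → ℝ) :=
  {P | ∃ (p : ∀ j : Fin n, Fin (c j) → ℝ)
      (R : ∀ i : Fin m, Fin (A i) → Fin (X i) → (∀ j : {j // I i j}, Fin (c j.1)) → ℝ),
      (∀ j lam, 0 ≤ p j lam) ∧ (∀ j, ∑ lam, p j lam = 1) ∧
      (∀ i a x lam, 0 ≤ R i a x lam) ∧ (∀ i x lam, ∑ a, R i a x lam = 1) ∧
      ∀ a x, P a x = ∑ lam : ∀ j, Fin (c j),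
        (∏ j, p j (lam j)) * ∏ i, R i (a i) (x i) (fun j => lam j.1)}

/-- **The finite-cardinality network-local set is compact**, for any network
and any fixed cardinality vector `c` with `c j ≥ 1`. -/
theorem finiteLocalSet_isCompact
    {m n : ℕ} (hm : 1 ≤ m) (hn : 1 ≤ n)
    (I : Fin m → Fin n → Prop) [∀ i j, Decidable (I i j)]
    (X A : Fin m → ℕ) (hX : ∀ i, 1 ≤ X i) (hA : ∀ i, 1 ≤ A i)
    (c : Fin n → ℕ) (hc : ∀ j, 1 ≤ c j) :
    IsCompact (finiteLocalSet I X A c) := by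
  classical
  set Param := (∀ j : Fin n, Fin (c j) → ℝ) ×
      (∀ i : Fin m, Fin (A i) → Fin (X i) → (∀ j : {j // I i j}, Fin (c j.1)) → ℝ) with hParam
  set Φ : Param → ((∀ i, Fin (A i)) → (∀ i, Fin (X i)) → ℝ) :=
    fun pr a x => ∑ lam : ∀ j, Fin (c j),
      (∏ j, pr.1 j (lam j)) * ∏ i, pr.2 i (a i) (x i) (fun j => lam j.1) with hΦ
  set K : Set Param := {pr | (∀ j lam, 0 ≤ pr.1 j lam) ∧ (∀ j, ∑ lam, pr.1 j lam = 1) ∧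
      (∀ i a x lam, 0 ≤ pr.2 i a x lam) ∧ (∀ i x lam, ∑ a, pr.2 i a x lam = 1)} with hKdef
  have himg : finiteLocalSet I X A c = Φ '' K := by
    ext P
    constructor
    · rintro ⟨p, R, h1, h2, h3, h4, h5⟩
      exact ⟨(p, R), ⟨h1, h2, h3, h4⟩, by funext a x; exact (h5 a x).symm⟩
    · rintro ⟨⟨p, R⟩, ⟨h1, h2, h3, h4⟩, rfl⟩
      exact ⟨p, R, h1, h2, h3, h4, fun a x => rfl⟩
  rw [himg]
  have hΦc : Continuous Φ := by
    apply continuous_pi; intro a; apply continuous_pi; intro x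
    apply continuous_finset_sum; intro lam _
    apply Continuous.mul
    · apply continuous_finset_prod; intro j _
      exact (continuous_apply _).comp ((continuous_apply j).comp continuous_fst)
    · apply continuous_finset_prod; intro i _
      exact (continuous_apply _).comp (((continuous_apply _).comp
        ((continuous_apply _).comp ((continuous_apply i).comp continuous_snd))))
  have hKc : IsCompact K := by
    have hbox : IsCompact ((Set.univ.pi fun j : Fin n => Set.univ.pi fun _ : Fin (c j) =>
        Set.Icc (0:ℝ) 1) ×ˢ (Set.univ.pi fun i : Fin m => Set.univ.pi fun _ : Fin (A i) =>
        Set.univ.pi fun _ : Fin (X i) => Set.univ.pi fun _ : (∀ j : {j // I i j}, Fin (c j.1)) =>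
        Set.Icc (0:ℝ) 1)) := by
      apply IsCompact.prod
      · exact isCompact_univ_pi fun j => isCompact_univ_pi fun _ => isCompact_Icc
      · exact isCompact_univ_pi fun i => isCompact_univ_pi fun _ =>
          isCompact_univ_pi fun _ => isCompact_univ_pi fun _ => isCompact_Icc
    apply hbox.of_isClosed_subset
    · -- K is closed
      have c1 : ∀ (j : Fin n) (lam : Fin (c j)), Continuous fun pr : Param => pr.1 j lam :=
        fun j lam => (continuous_apply _).comp ((continuous_apply j).comp continuous_fst)
      have c2 : ∀ (i : Fin m) (a : Fin (A i)) (x : Fin (X i)) lam,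
          Continuous fun pr : Param => pr.2 i a x lam :=
        fun i a x lam => (continuous_apply _).comp ((continuous_apply _).comp
          ((continuous_apply _).comp ((continuous_apply i).comp continuous_snd)))
      have : K = (⋂ j, ⋂ lam, {pr : Param | 0 ≤ pr.1 j lam}) ∩
          ((⋂ j, {pr : Param | ∑ lam, pr.1 j lam = 1}) ∩
          ((⋂ i, ⋂ a, ⋂ x, ⋂ lam, {pr : Param | 0 ≤ pr.2 i a x lam}) ∩
          (⋂ i, ⋂ x, ⋂ lam, {pr : Param | ∑ a, pr.2 i a x lam = 1}))) := by
        ext pr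
        simp only [hKdef, Set.mem_setOf_eq, Set.mem_inter_iff, Set.mem_iInter]
      rw [this]
      refine (isClosed_iInter fun j => isClosed_iInter fun lam =>
          isClosed_le continuous_const (c1 j lam)).inter
        ((isClosed_iInter fun j => isClosed_eq (continuous_finset_sum _
          fun lam _ => c1 j lam) continuous_const).inter
        ((isClosed_iInter fun i => isClosed_iInter fun a => isClosed_iInter fun x =>
          isClosed_iInter fun lam => isClosed_le continuous_const (c2 i a x lam)).inter
        (isClosed_iInter fun i => isClosed_iInter fun x => isClosed_iInter fun lam =>
          isClosed_eq (continuous_finset_sum _ fun a _ => c2 i a x lam) continuous_const)))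
    · -- K ⊆ box
      rintro ⟨p, R⟩ ⟨h1, h2, h3, h4⟩
      constructor
      · intro j _; intro lam _
        refine ⟨h1 j lam, ?_⟩
        calc p j lam ≤ ∑ l, p j l := Finset.single_le_sum (fun l _ => h1 j l) (Finset.mem_univ lam)
          _ = 1 := h2 j
      · intro i _; intro a _; intro x _; intro lam _
        refine ⟨h3 i a x lam, ?_⟩
        calc R i a x lam ≤ ∑ b, R i b x lam :=
            Finset.single_le_sum (fun b _ => h3 i b x lam) (Finset.mem_univ a)
          _ = 1 := h4 i x lam
  exact hKc.image hΦc
end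

section
/- For any network and any fixed cardinality vector c : Fin n → ℕ with c j ≥ 1, the finite-cardinality network-local set L_c is path-connected: any behavior in L_c can be joined by a continuous path inside L_c to the uniformly random behavior P_𝟙(ā|x̄) = Π_i (1 / A i), by linearly interpolating each party's response function toward the uniform response. -/
private lemma sum_prod_probs {n : ℕ} (c : Fin n → ℕ) (p : ∀ j : Fin n, Fin (c j) → ℝ)
    (hp1 : ∀ j, ∑ lam, p j lam = 1) :
    ∑ lam : ∀ j, Fin (c j), ∏ j, p j (lam j) = 1 := by
  rw [← Fintype.prod_sum]
  simp [hp1]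

/-- **The finite-cardinality network-local set is path-connected**: the
uniformly random behavior `P₁(ā|x̄) = ∏ᵢ 1/Aᵢ` belongs to `L_c`, and every
behavior of `L_c` can be joined to `P₁` by a continuous path inside `L_c`. -/
theorem finiteLocalSet_pathConnected
    {m n : ℕ} (hm : 1 ≤ m) (hn : 1 ≤ n)
    (I : Fin m → Fin n → Prop) [∀ i j, Decidable (I i j)]
    (X A : Fin m → ℕ) (hX : ∀ i, 1 ≤ X i) (hA : ∀ i, 1 ≤ A i)
    (c : Fin n → ℕ) (hc : ∀ j, 1 ≤ c j) :
    (fun (_ : ∀ i, Fin (A i)) (_ : ∀ i, Fin (X i)) => ∏ i, (1 : ℝ) / (A i))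
        ∈ finiteLocalSet I X A c ∧
      ∀ P ∈ finiteLocalSet I X A c,
        JoinedIn (finiteLocalSet I X A c) P
          (fun _ _ => ∏ i, (1 : ℝ) / (A i)) := by
  have hAne : ∀ i, (A i : ℝ) ≠ 0 := fun i =>
    Nat.cast_ne_zero.mpr (Nat.one_le_iff_ne_zero.mp (hA i))
  have hcne : ∀ j, (c j : ℝ) ≠ 0 := fun j =>
    Nat.cast_ne_zero.mpr (Nat.one_le_iff_ne_zero.mp (hc j))
  constructor
  · -- uniform behavior is in the set
    refine ⟨fun j _ => 1 / (c j : ℝ), fun i _ _ _ => 1 / (A i : ℝ), ?_, ?_, ?_, ?_, ?_⟩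
    · intro j lam; positivity
    · intro j
      simp [Finset.sum_const, Finset.card_univ, hcne j]
    · intro i a x lam; positivity
    · intro i x lam
      simp [Finset.sum_const, Finset.card_univ, hAne i]
    · intro a x
      rw [← Finset.sum_mul]
      have key : (∑ _lam : ∀ j, Fin (c j), ∏ j, (1:ℝ) / (c j)) = 1 :=
        sum_prod_probs c (fun j _ => 1 / (c j : ℝ)) (fun j => by
          simp [Finset.sum_const, Finset.card_univ, hcne j])
      rw [key, one_mul]
  · rintro P ⟨p, R, hp0, hp1, hR0, hR1, hP⟩
    -- interpolated response functions
    set Rt : ℝ → ∀ i : Fin m, Fin (A i) → Fin (X i) → (∀ j : {j // I i j}, Fin (c j.1)) → ℝ :=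
      fun t i a x lam => (1 - t) * R i a x lam + t * (1 / (A i : ℝ)) with hRt
    set F : ℝ → (∀ i, Fin (A i)) → (∀ i, Fin (X i)) → ℝ :=
      fun t a x => ∑ lam : ∀ j, Fin (c j),
        (∏ j, p j (lam j)) * ∏ i, Rt t i (a i) (x i) (fun j => lam j.1) with hF
    have hFcont : Continuous F := by
      apply continuous_pi; intro a; apply continuous_pi; intro x
      apply continuous_finset_sum; intro lam _
      apply Continuous.mul continuous_const
      apply continuous_finset_prod; intro i _
      simp only [hRt]
      exact ((continuous_const.sub continuous_id).mul continuous_const).add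
        (continuous_id.mul continuous_const)
    have hmem : ∀ t : ℝ, t ∈ Set.Icc (0:ℝ) 1 → F t ∈ finiteLocalSet I X A c := by
      intro t ht
      refine ⟨p, Rt t, hp0, hp1, ?_, ?_, fun a x => rfl⟩
      · intro i a x lam
        have h1 : 0 ≤ 1 - t := by linarith [ht.2]
        have h2 : 0 ≤ t := ht.1
        exact add_nonneg (mul_nonneg h1 (hR0 i a x lam))
          (mul_nonneg h2 (by positivity))
      · intro i x lam
        simp only [hRt]
        rw [Finset.sum_add_distrib, ← Finset.mul_sum, hR1, ← Finset.mul_sum]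
        simp [Finset.sum_const, Finset.card_univ, hAne i]
    refine ⟨⟨⟨fun s => F s, hFcont.comp continuous_subtype_val⟩, ?_, ?_⟩,
        fun s => hmem s s.2⟩
    · -- F 0 = P
      funext a x
      simp only [hF, hRt, Set.Icc.coe_zero]
      rw [hP a x]
      norm_num
    · -- F 1 = uniform
      funext a x
      simp only [hF, hRt, Set.Icc.coe_one]
      norm_num
      rw [← Finset.sum_mul, sum_prod_probs c p hp1, one_mul]
end

section
/- Let ρ be a density matrix on ℂ^p ⊗ ℂ^q (a positive semidefinite complex (pq)×(pq) matrix with trace 1), and let {Π^A_{a|x} : a ∈ Fin A, x ∈ Fin X} and {Π^B_{b|y} : b ∈ Fin B, y ∈ Fin Y} be POVMs on ℂ^p and ℂ^q respectively (positive semidefinite matrices with Σ_a Π^A_{a|x} = 1 for each x and Σ_b Π^B_{b|y} = 1 for each y). Set d = A·B·X·Y. Then there exists a density matrix ρ' on ℂ^p ⊗ ℂ^q of rank at most d+1 such that tr[ρ' (Π^A_{a|x} ⊗ Π^B_{b|y})] = tr[ρ (Π^A_{a|x} ⊗ Π^B_{b|y})] for all a, b, x, y; i.e., the rank of the shared quantum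 state can be reduced to d+1 without changing the observed behavior P(ab|xy), while the dimension of the Hilbert space is unchanged. -/
open Matrix
open scoped Kronecker ComplexOrder

/-!
The behavior is a real-linear function of the state, `ρ ↦ (Re tr (ρ Eᵢ))ᵢ ∈ ℝ^d` with
`Eᵢ = Π^A_{a|x} ⊗ Π^B_{b|y}`; taking real parts loses nothing because `ρ` and `Eᵢ` are Hermitian.
By the spectral theorem `ρ` is a convex combination of rank-one density matrices, so its image
lies in the convex hull of their images, and by Carathéodory's theorem in `ℝ^d` already in the
convex hull of the images of at most `d + 1` of them. The corresponding mixture of these pure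
states is a density matrix of rank at most `d + 1` with the same behavior.
-/

namespace Matrix

variable {m n K : Type*} [Fintype n] [Field K]

theorem rank_add_le (M N : Matrix m n K) : (M + N).rank ≤ M.rank + N.rank := by
  rw [rank, rank, rank, mulVecLin_add]
  refine (Submodule.finrank_mono ?_).trans (Submodule.finrank_add_le_finrank_add_finrank _ _)
  rintro y ⟨x, rfl⟩
  exact Submodule.add_mem_sup (LinearMap.mem_range_self _ x) (LinearMap.mem_range_self _ x)

theorem rank_finsetSum_le {ι : Type*} (s : Finset ι) (M : ι → Matrix m n K) :
    (∑ i ∈ s, M i).rank ≤ ∑ i ∈ s, (M i).rank :=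
  Finset.le_sum_of_subadditive (fun M : Matrix m n K ↦ M.rank) rank_zero.le rank_add_le s M

theorem rank_smul_le [Fintype m] [DecidableEq m] (c : K) (M : Matrix m n K) :
    (c • M).rank ≤ M.rank := by
  rw [smul_eq_diagonal_mul]
  exact rank_mul_le_right _ _

end Matrix

theorem LinearMap.exists_finset_card_le_finrank_succ_map_eq_of_mem_convexHull
    {𝕜 E F : Type*} [Field 𝕜] [LinearOrder 𝕜] [IsStrictOrderedRing 𝕜]
    [AddCommGroup E] [Module 𝕜 E] [AddCommGroup F] [Module 𝕜 F] [FiniteDimensional 𝕜 F]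
    (L : E →ₗ[𝕜] F) {s : Set E} {x : E} (hx : x ∈ convexHull 𝕜 s) :
    ∃ t : Finset E, ↑t ⊆ s ∧ t.card ≤ Module.finrank 𝕜 F + 1 ∧
      ∃ y ∈ convexHull 𝕜 (t : Set E), L y = L x := by
  classical
  have hLx : L x ∈ convexHull 𝕜 (L '' s) := L.image_convexHull s ▸ Set.mem_image_of_mem L hx
  rw [convexHull_eq_union] at hLx
  simp only [Set.mem_iUnion] at hLx
  obtain ⟨t', ht's, ht'_indep, hLx⟩ := hLx
  obtain ⟨t, hts, hinj, rfl⟩ := Finset.exists_subset_injOn_image_eq_of_surjOn s t' ht's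
  refine ⟨t, hts, ?_, ?_⟩
  · rw [← Finset.card_image_of_injOn hinj]
    simpa using ht'_indep.card_le_finrank_succ.trans
      (Nat.succ_le_succ (Submodule.finrank_le _))
  · rwa [Finset.coe_image, ← L.image_convexHull] at hLx

namespace Matrix

variable {n 𝕜 : Type*} [Fintype n] [RCLike 𝕜]

theorem IsHermitian.ofReal_re_trace_mul {M N : Matrix n n 𝕜} (hM : M.IsHermitian)
    (hN : N.IsHermitian) : ((RCLike.re (M * N).trace : ℝ) : 𝕜) = (M * N).trace := by
  refine RCLike.conj_eq_iff_re.mp ?_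
  change star _ = _
  rw [← trace_conjTranspose, conjTranspose_mul, hM.eq, hN.eq, trace_mul_comm]

theorem IsHermitian.eq_sum_eigenvalues_smul_vecMulVec [DecidableEq n] {M : Matrix n n 𝕜}
    (hM : M.IsHermitian) :
    M = ∑ j, hM.eigenvalues j •
      vecMulVec ⇑(hM.eigenvectorBasis j) (star ⇑(hM.eigenvectorBasis j)) := by
  conv_lhs => rw [hM.spectral_theorem, Unitary.conjStarAlgAut_apply]
  ext i k
  rw [Matrix.mul_apply]
  simp only [Matrix.sum_apply, mul_diagonal, vecMulVec_apply, Matrix.smul_apply,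
    Matrix.star_apply, eigenvectorUnitary_apply, Function.comp_apply, Pi.star_apply]
  refine Finset.sum_congr rfl fun j _ ↦ ?_
  rw [RCLike.real_smul_eq_coe_smul (K := 𝕜), smul_eq_mul]
  ring

theorem rank_le_card_of_mem_convexHull {t : Finset (Matrix n n 𝕜)} (ht : ∀ σ ∈ t, σ.rank ≤ 1)
    {ρ : Matrix n n 𝕜} (hρ : ρ ∈ convexHull ℝ (t : Set (Matrix n n 𝕜))) : ρ.rank ≤ t.card := by
  classical
  obtain ⟨w, -, -, rfl⟩ := Finset.mem_convexHull'.mp hρ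
  calc (∑ σ ∈ t, w σ • σ).rank ≤ ∑ σ ∈ t, (w σ • σ).rank := rank_finsetSum_le _ _
    _ ≤ ∑ σ ∈ t, 1 := Finset.sum_le_sum fun σ hσ ↦ by
      rw [RCLike.real_smul_eq_coe_smul (K := 𝕜)]
      exact (rank_smul_le _ _).trans (ht σ hσ)
    _ = t.card := by simp

end Matrix

section DensityMatrix

variable {n 𝕜 : Type*} [Fintype n] [RCLike 𝕜]

variable (n 𝕜) in
def densityMatrices : Set (Matrix n n 𝕜) :=
  {ρ | ρ.PosSemidef ∧ ρ.trace = 1}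

variable (n 𝕜) in
def pureStates : Set (Matrix n n 𝕜) :=
  {ρ ∈ densityMatrices n 𝕜 | ρ.rank ≤ 1}

theorem convex_densityMatrices : Convex ℝ (densityMatrices n 𝕜) := by
  rintro ρ ⟨hρ, hρtr⟩ σ ⟨hσ, hσtr⟩ a b ha hb hab
  refine ⟨(hρ.smul ha).add (hσ.smul hb), ?_⟩
  rw [trace_add, trace_smul, trace_smul, hρtr, hσtr, ← add_smul, hab, one_smul]

theorem vecMulVec_star_mem_pureStates {u : n → 𝕜} (hu : u ⬝ᵥ star u = 1) :
    vecMulVec u (star u) ∈ pureStates n 𝕜 :=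
  ⟨⟨posSemidef_vecMulVec_self_star u, by rw [trace_vecMulVec, hu]⟩, rank_vecMulVec_le _ _⟩

theorem densityMatrices_subset_convexHull_pureStates :
    densityMatrices n 𝕜 ⊆ convexHull ℝ (pureStates n 𝕜) := by
  classical
  rintro ρ ⟨hρ, hρtr⟩
  have hH := hρ.isHermitian
  rw [hH.eq_sum_eigenvalues_smul_vecMulVec]
  refine (convex_convexHull ℝ _).sum_mem (fun j _ ↦ hρ.eigenvalues_nonneg j) ?_
    fun j _ ↦ subset_convexHull ℝ _ (vecMulVec_star_mem_pureStates ?_)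
  · exact_mod_cast hH.trace_eq_sum_eigenvalues.symm.trans hρtr
  · exact hH.eigenvectorBasis.inner_eq_one j

def expectationMap {ι : Type*} (E : ι → Matrix n n 𝕜) : Matrix n n 𝕜 →ₗ[ℝ] ι → ℝ where
  toFun ρ i := RCLike.re (ρ * E i).trace
  map_add' ρ σ := by ext; simp [add_mul, trace_add]
  map_smul' c ρ := by ext; simp [RCLike.smul_re]

theorem exists_mem_densityMatrices_rank_le_trace_mul_eq {ι : Type*} [Fintype ι]
    {E : ι → Matrix n n 𝕜} (hE : ∀ i, (E i).IsHermitian) {ρ : Matrix n n 𝕜}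
    (hρ : ρ ∈ densityMatrices n 𝕜) :
    ∃ ρ' ∈ densityMatrices n 𝕜, ρ'.rank ≤ Fintype.card ι + 1 ∧
      ∀ i, (ρ' * E i).trace = (ρ * E i).trace := by
  obtain ⟨t, ht_pure, ht_card, ρ', hρ'_hull, hρ'_exp⟩ :=
    (expectationMap E).exists_finset_card_le_finrank_succ_map_eq_of_mem_convexHull
      (densityMatrices_subset_convexHull_pureStates hρ)
  have hρ' : ρ' ∈ densityMatrices n 𝕜 :=
    convex_densityMatrices.convexHull_subset_iff.mpr (ht_pure.trans fun _ h ↦ h.1) hρ'_hull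
  refine ⟨ρ', hρ', ?_, fun i ↦ ?_⟩
  · rw [Module.finrank_fintype_fun_eq_card] at ht_card
    exact (rank_le_card_of_mem_convexHull (fun σ hσ ↦ (ht_pure hσ).2) hρ'_hull).trans ht_card
  · rw [← hρ'.1.isHermitian.ofReal_re_trace_mul (hE i),
      ← hρ.1.isHermitian.ofReal_re_trace_mul (hE i)]
    exact congrArg _ (congrFun hρ'_exp i)

end DensityMatrix

theorem quantum_rank_reduction_general
    (p q A B X Y : ℕ)
    (ρ : Matrix (Fin p × Fin q) (Fin p × Fin q) ℂ)
    (hρ : ρ.PosSemidef) (hρtr : ρ.trace = 1)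
    (PiA : Fin A → Fin X → Matrix (Fin p) (Fin p) ℂ)
    (PiB : Fin B → Fin Y → Matrix (Fin q) (Fin q) ℂ)
    (hPiA : ∀ a x, (PiA a x).PosSemidef)
    (hPiB : ∀ b y, (PiB b y).PosSemidef) :
    ∃ ρ' : Matrix (Fin p × Fin q) (Fin p × Fin q) ℂ,
      ρ'.PosSemidef ∧ ρ'.trace = 1 ∧ ρ'.rank ≤ A * B * X * Y + 1 ∧
      ∀ (a : Fin A) (b : Fin B) (x : Fin X) (y : Fin Y),
        (ρ' * (PiA a x ⊗ₖ PiB b y)).trace = (ρ * (PiA a x ⊗ₖ PiB b y)).trace := by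
  obtain ⟨ρ', ⟨hρ'_psd, hρ'_tr⟩, hrank, htrace⟩ :=
    exists_mem_densityMatrices_rank_le_trace_mul_eq
      (E := fun i : Fin A × Fin B × Fin X × Fin Y ↦ PiA i.1 i.2.2.1 ⊗ₖ PiB i.2.1 i.2.2.2)
      (fun i ↦ ((hPiA _ _).kronecker (hPiB _ _)).isHermitian) ⟨hρ, hρtr⟩
  refine ⟨ρ', hρ'_psd, hρ'_tr, ?_, fun a b x y ↦ htrace (a, b, x, y)⟩
  simpa [Fintype.card_prod, mul_assoc] using hrank

/-- **Rank reduction of the shared quantum state.** Given a density matrix `ρ`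
on `ℂ^p ⊗ ℂ^q` and POVMs for Alice and Bob, there is a density matrix `ρ'` of
rank at most `d + 1` (`d = A·B·X·Y`) producing exactly the same behavior
`P(ab|xy) = tr[ρ (Π^A_{a|x} ⊗ Π^B_{b|y})]`; the dimension of the Hilbert space
is unchanged. -/
theorem quantum_rank_reduction
    (p q A B X Y : ℕ)
    (ρ : Matrix (Fin p × Fin q) (Fin p × Fin q) ℂ)
    (hρ : ρ.PosSemidef) (hρtr : ρ.trace = 1)
    (PiA : Fin A → Fin X → Matrix (Fin p) (Fin p) ℂ)
    (PiB : Fin B → Fin Y → Matrix (Fin q) (Fin q) ℂ)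
    (hPiA : ∀ a x, (PiA a x).PosSemidef)
    (hPiAsum : ∀ x, ∑ a, PiA a x = 1)
    (hPiB : ∀ b y, (PiB b y).PosSemidef)
    (hPiBsum : ∀ y, ∑ b, PiB b y = 1) :
    ∃ ρ' : Matrix (Fin p × Fin q) (Fin p × Fin q) ℂ,
      ρ'.PosSemidef ∧ ρ'.trace = 1 ∧ ρ'.rank ≤ A * B * X * Y + 1 ∧
      ∀ (a : Fin A) (b : Fin B) (x : Fin X) (y : Fin Y),
        (ρ' * (PiA a x ⊗ₖ PiB b y)).trace = (ρ * (PiA a x ⊗ₖ PiB b y)).trace :=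
  quantum_rank_reduction_general p q A B X Y ρ hρ hρtr PiA PiB hPiA hPiB
end

section
/- The affine span of the set of nonsignaling behaviors has dimension Π_{i=1}^m [X i · (A i − 1) + 1] − 1: in the real vector space of functions P : (Π i, Fin (A i)) → (Π i, Fin (X i)) → ℝ, consider the set 𝒫 of behaviors satisfying (i) P(ā|x̄) ≥ 0, (ii) Σ_ā P(ā|x̄) = 1 for every x̄, and (iii) nonsignaling: for every party i and all ā, x̄, the marginal Σ_{a_i} P(ā|x̄) does not depend on the input x_i (it depends only on the outputs and inputs of the other parties). Then the direction of the affine span of 𝒫 has finrank equal to Π_i [X i · (A i − 1) + 1] − 1. -/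
/-!
Fix an output `oᵢ` of every party. One-party behaviours are parameterised by their total mass
and the probabilities of all outputs `c ≠ oᵢ` (Collins–Gisin coordinates); the behaviours
dual to these coordinates are themselves nonsignaling, and so are their products over the
parties. These products are linearly independent, because the product coordinates are a dual
family, and they span the nonsignaling behaviours: a product coordinate marginalises exactly
the parties whose factor is the total mass, so by no-signaling it can be evaluated at any input
of those parties. Dropping the single product that only records the total mass leaves a basis
of the massless nonsignaling behaviours, which has `∏ᵢ (Xᵢ (Aᵢ - 1) + 1) - 1` elements.
Finally, the uniform behaviour is strictly positive, so it can be moved a little in every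
massless nonsignaling direction without leaving the nonsignaling set; hence that space is the
direction of the affine span.
-/

open Finset Function

namespace Nonsignaling

theorem sum_prod_mul_prod {ι R : Type*} [Fintype ι] [DecidableEq ι] [CommSemiring R]
    {κ : ι → Type*} [∀ i, Fintype (κ i)] (f g : ∀ i, κ i → R) :
    ∑ l : ∀ i, κ i, (∏ i, f i (l i)) * ∏ i, g i (l i) = ∏ i, ∑ l, f i l * g i l := by
  simp_rw [← prod_mul_distrib]
  exact (Fintype.prod_sum fun i l => f i l * g i l).symm

theorem direction_affineSpan_eq_of_smul_vadd_mem {k V P : Type*} [Field k] [AddCommGroup V]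
    [Module k V] [AddTorsor V P] {s : Set P} {p : P} {W : Submodule k V} (hp : p ∈ s)
    (hs : ∀ q ∈ s, q -ᵥ p ∈ W) (hW : ∀ v ∈ W, ∃ ε : k, ε ≠ 0 ∧ ε • v +ᵥ p ∈ s) :
    (affineSpan k s).direction = W := by
  rw [direction_affineSpan, vectorSpan_eq_span_vsub_set_right k hp]
  refine le_antisymm (Submodule.span_le.2 ?_) fun v hv => ?_
  · rintro _ ⟨q, hq, rfl⟩
    exact hs q hq
  · obtain ⟨ε, hε, hmem⟩ := hW v hv
    have : ε • v ∈ Submodule.span k ((· -ᵥ p) '' s) :=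
      Submodule.subset_span ⟨_, hmem, vadd_vsub _ _⟩
    simpa [smul_smul, hε] using Submodule.smul_mem _ ε⁻¹ this

section OneParty

variable {α β : Type*} [DecidableEq α] (o : α)

/-- `none` indexes the total mass, `some (x, c)` the probability of output `c ≠ o` on input `x`. -/
abbrev CGIndex (β : Type*) (o : α) : Type _ := Option (β × {c : α // c ≠ o})

def cgDual : CGIndex β o → α → ℝ
  | none, _ => 1
  | some (_, c), b => if b = c then 1 else 0

variable [DecidableEq β]

/-- The probability of the output `o` is the total mass minus the probabilities of the
outputs `c ≠ o`. -/
def cgBasis : CGIndex β o → α → β → ℝ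
  | none, b, _ => if b = o then 1 else 0
  | some (x', c), b, x => if x' = x then (if b = c then 1 else 0) - (if b = o then 1 else 0) else 0

variable [Fintype α]

theorem sum_cgDual_mul_cgBasis {s t : CGIndex β o} {x : β} (hs : ∀ p ∈ s, p.1 = x) :
    ∑ b, cgDual o s b * cgBasis o t b x = if s = t then 1 else 0 := by
  rcases s with _ | ⟨x', c, hc⟩ <;> rcases t with _ | ⟨y, d, hd⟩
  · simp [cgDual, cgBasis]
  · simp [cgDual, cgBasis, sum_sub_distrib]
  · simp [cgDual, cgBasis, hc.symm]
  · obtain rfl : x' = x := hs _ rfl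
    simp [cgDual, cgBasis, hc, ite_and, @eq_comm _ y]

theorem sum_cgBasis (t : CGIndex β o) (x : β) :
    ∑ b, cgBasis o t b x = if none = t then 1 else 0 := by
  simpa [cgDual] using sum_cgDual_mul_cgBasis o (s := none) (t := t) (x := x) (by simp)

theorem sum_index_cgDual_mul_cgBasis [Fintype β] (b' b : α) (x : β) :
    ∑ s : CGIndex β o, cgDual o s b' * cgBasis o s b x = if b' = b then 1 else 0 := by
  simp only [Fintype.sum_option, Fintype.sum_prod_type, cgDual, cgBasis, one_mul, mul_ite,
    mul_zero]
  rw [sum_comm]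
  simp only [sum_ite_eq', mem_univ, if_true, ite_mul, one_mul, zero_mul]
  by_cases hb' : b' = o
  · subst hb'
    have hne : ∀ c : {c // c ≠ b'}, ¬b' = c := fun c h => c.2 h.symm
    simp only [hne, if_false, sum_const_zero, add_zero]
    exact if_congr eq_comm rfl rfl
  · have key : ∀ c : {c // c ≠ o}, b' = ↑c ↔ ⟨b', hb'⟩ = c := fun c => by rw [Subtype.ext_iff]
    simp only [key, sum_ite_eq, mem_univ, if_true]
    rw [add_sub_cancel]
    exact if_congr eq_comm rfl rfl

end OneParty

abbrev Behavior {ι : Type*} (In Out : ι → Type*) : Type _ := (∀ i, Out i) → (∀ i, In i) → ℝ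

variable {ι : Type*} [DecidableEq ι] {In Out : ι → Type*} [∀ i, Fintype (Out i)]

variable (In Out) in
def nonsignaling : Submodule ℝ (Behavior In Out) where
  carrier := {P | ∀ (i : ι) (a : ∀ i, Out i) (x x' : ∀ i, In i), (∀ j, j ≠ i → x j = x' j) →
    ∑ c : Out i, P (update a i c) x = ∑ c : Out i, P (update a i c) x'}
  add_mem' {P Q} hP hQ i a x x' h := by
    simp only [Pi.add_apply, sum_add_distrib, hP i a x x' h, hQ i a x x' h]
  zero_mem' := by simp
  smul_mem' r P hP i a x x' h := by
    simp only [Pi.smul_apply, smul_eq_mul, ← mul_sum, hP i a x x' h]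

variable [Fintype ι]

variable (In Out) in
def zeroMass : Submodule ℝ (Behavior In Out) where
  carrier := {P | ∀ x, ∑ b, P b x = 0}
  add_mem' {P Q} hP hQ x := by simp [sum_add_distrib, hP x, hQ x]
  zero_mem' x := by simp
  smul_mem' r P hP x := by simp [← mul_sum, hP x]

theorem prod_mem_nonsignaling (p : ∀ i, Out i → In i → ℝ)
    (hp : ∀ i x x', ∑ c, p i c x = ∑ c, p i c x') :
    (fun a x => ∏ i, p i (a i) (x i)) ∈ nonsignaling In Out := by
  intro i a x x' hxx'
  have hsplit (y : ∀ j, In j) : ∑ c, ∏ j, p j (update a i c j) (y j) =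
      (∑ c, p i c (y i)) * ∏ j ∈ {i}ᶜ, p j (a j) (y j) := by
    have hrest (c : Out i) :
        ∏ j ∈ {i}ᶜ, p j (update a i c j) (y j) = ∏ j ∈ {i}ᶜ, p j (a j) (y j) :=
      prod_congr rfl fun j hj => by rw [update_of_ne (by simpa using hj)]
    simp_rw [Fintype.prod_eq_mul_prod_compl i, update_self, hrest, sum_mul]
  rw [hsplit, hsplit, hp i (x i) (x' i)]
  exact congrArg _ (prod_congr rfl fun j hj => by rw [hxx' j (by simpa using hj)])

theorem sum_mul_eq_of_update_eq {P : Behavior In Out} (hP : P ∈ nonsignaling In Out) {i : ι}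
    {g : (∀ j, Out j) → ℝ} (hg : ∀ b c, g (update b i c) = g b) {x y : ∀ j, In j}
    (hxy : ∀ j, j ≠ i → x j = y j) :
    ∑ b, g b * P b x = ∑ b, g b * P b y := by
  let e := (Equiv.piSplitAt i Out).symm
  have hslice (z : ∀ j, In j) : ∑ b, g b * P b z =
      ∑ r : ∀ j : {j // j ≠ i}, Out j, ∑ c, g (e (c, r)) * P (e (c, r)) z := by
    rw [← e.sum_comp, Fintype.sum_prod_type, sum_comm]
  rw [hslice, hslice]
  refine sum_congr rfl fun r _ => ?_
  rcases isEmpty_or_nonempty (Out i) with hempty | ⟨⟨c₀⟩⟩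
  · simp only [univ_eq_empty, sum_empty]
  · obtain ⟨base, hbase⟩ : ∃ base, ∀ c, e (c, r) = update base i c := by
      refine ⟨e (c₀, r), fun c => funext fun j => ?_⟩
      by_cases hj : j = i
      · subst hj
        simp [e]
      · simp [e, hj]
    simp_rw [hbase, hg, ← mul_sum, hP i base x y hxy]

theorem sum_mul_eq_of_forall_update_eq {P : Behavior In Out} (hP : P ∈ nonsignaling In Out)
    {S : Finset ι} {g : (∀ j, Out j) → ℝ} (hg : ∀ i ∈ S, ∀ b c, g (update b i c) = g b)
    {x y : ∀ j, In j} (hxy : ∀ j ∉ S, x j = y j) :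
    ∑ b, g b * P b x = ∑ b, g b * P b y := by
  induction S using Finset.induction_on generalizing x with
  | empty => rw [funext fun j => hxy j (notMem_empty j)]
  | insert i S hi ih =>
    calc ∑ b, g b * P b x = ∑ b, g b * P b (update x i (y i)) :=
          sum_mul_eq_of_update_eq hP (hg i (mem_insert_self i S))
            fun j hj => (update_of_ne hj _ _).symm
      _ = ∑ b, g b * P b y := by
          refine ih (fun j hj => hg j (mem_insert_of_mem hj)) fun j hj => ?_
          by_cases hji : j = i
          · subst hji
            exact update_self ..
          · rw [update_of_ne hji]
            exact hxy j (by simp [hji, hj])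

section CollinsGisin

variable [∀ i, DecidableEq (Out i)] (o : ∀ i, Out i)

/-- Parties whose coordinate is the total mass are given the input `x₀`; for nonsignaling
behaviours this choice does not matter. -/
def cgCoords (x₀ : ∀ i, In i) : Behavior In Out →ₗ[ℝ] (∀ i, CGIndex (In i) (o i)) → ℝ where
  toFun P t := ∑ b, (∏ i, cgDual (o i) (t i) (b i)) * P b (fun i => (t i).elim (x₀ i) Prod.fst)
  map_add' P Q := by ext t; simp [mul_add, sum_add_distrib]
  map_smul' r P := by ext t; simp [mul_sum, mul_left_comm]

theorem cgCoords_none (x₀ : ∀ i, In i) (P : Behavior In Out) :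
    cgCoords o x₀ P (fun _ => none) = ∑ b, P b x₀ := by
  simp [cgCoords, cgDual]

variable [∀ i, DecidableEq (In i)]

def cgBehavior (t : ∀ i, CGIndex (In i) (o i)) : Behavior In Out :=
  fun b x => ∏ i, cgBasis (o i) (t i) (b i) (x i)

theorem cgBehavior_mem_nonsignaling (t : ∀ i, CGIndex (In i) (o i)) :
    cgBehavior o t ∈ nonsignaling In Out :=
  prod_mem_nonsignaling _ fun i x x' => by rw [sum_cgBasis, sum_cgBasis]

theorem sum_cgDual_mul_cgBehavior {s : ∀ i, CGIndex (In i) (o i)} {x : ∀ i, In i}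
    (hs : ∀ i, ∀ p ∈ s i, p.1 = x i) (t : ∀ i, CGIndex (In i) (o i)) :
    ∑ b, (∏ i, cgDual (o i) (s i) (b i)) * cgBehavior o t b x = if s = t then 1 else 0 := by
  refine (sum_prod_mul_prod (fun i l => cgDual (o i) (s i) l)
    fun i l => cgBasis (o i) (t i) l (x i)).trans ?_
  simp only [sum_cgDual_mul_cgBasis (o _) (hs _), Fintype.prod_boole, funext_iff]

theorem sum_index_cgDual_mul_cgBehavior [∀ i, Fintype (In i)] (b' b : ∀ i, Out i)
    (x : ∀ i, In i) :
    ∑ t : ∀ i, CGIndex (In i) (o i), (∏ i, cgDual (o i) (t i) (b' i)) * cgBehavior o t b x =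
      if b' = b then 1 else 0 := by
  refine (sum_prod_mul_prod (fun i s => cgDual (o i) s (b' i))
    fun i s => cgBasis (o i) s (b i) (x i)).trans ?_
  simp only [sum_index_cgDual_mul_cgBasis, Fintype.prod_boole, funext_iff]

theorem cgCoords_cgBehavior (x₀ : ∀ i, In i) (s t : ∀ i, CGIndex (In i) (o i)) :
    cgCoords o x₀ (cgBehavior o t) s = if s = t then 1 else 0 :=
  sum_cgDual_mul_cgBehavior o (fun i p hp => by simp [Option.mem_def.1 hp]) t

theorem sum_cgBehavior (t : ∀ i, CGIndex (In i) (o i)) (x : ∀ i, In i) :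
    ∑ b, cgBehavior o t b x = if (fun _ => none) = t then 1 else 0 := by
  simpa [cgDual] using sum_cgDual_mul_cgBehavior o (s := fun _ => none) (x := x) (by simp) t

theorem sum_cgCoords_smul_cgBehavior [∀ i, Fintype (In i)] (x₀ : ∀ i, In i)
    {P : Behavior In Out} (hP : P ∈ nonsignaling In Out) :
    ∑ t, cgCoords o x₀ P t • cgBehavior o t = P := by
  ext b x
  simp only [Finset.sum_apply, Pi.smul_apply, smul_eq_mul]
  have hterm (t : ∀ i, CGIndex (In i) (o i)) : cgCoords o x₀ P t * cgBehavior o t b x =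
      (∑ b', (∏ i, cgDual (o i) (t i) (b' i)) * P b' x) * cgBehavior o t b x := by
    by_cases ht : ∀ i, ∀ p ∈ t i, p.1 = x i
    · congr 1
      refine sum_mul_eq_of_forall_update_eq hP (S := {i | t i = none}) (fun i hi b' c => ?_)
        fun j hj => ?_
      · refine prod_congr rfl fun j _ => ?_
        by_cases hji : j = i
        · subst hji
          simp [(mem_filter.1 hi).2, cgDual]
        · rw [update_of_ne hji]
      · obtain ⟨p, hp⟩ := Option.ne_none_iff_exists'.1 (by simpa using hj)
        simp [hp, ht j p hp]
    · push Not at ht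
      obtain ⟨i, p, hp, hpx⟩ := ht
      have : cgBehavior o t b x = 0 :=
        prod_eq_zero (mem_univ i) (by simp [Option.mem_def.1 hp, cgBasis, hpx])
      simp [this]
  calc ∑ t, cgCoords o x₀ P t * cgBehavior o t b x
      = ∑ b', (∑ t, (∏ i, cgDual (o i) (t i) (b' i)) * cgBehavior o t b x) * P b' x := by
        simp_rw [hterm, sum_mul, mul_right_comm _ (P _ x)]
        exact sum_comm
    _ = P b x := by simp [sum_index_cgDual_mul_cgBehavior]

end CollinsGisin

section Dimension

variable [∀ i, Fintype (In i)] [∀ i, DecidableEq (In i)] [∀ i, DecidableEq (Out i)]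
  [∀ i, Nonempty (In i)]

theorem linearIndependent_cgBehavior (o : ∀ i, Out i) :
    LinearIndependent ℝ (cgBehavior (In := In) o) := by
  refine LinearIndependent.of_comp (cgCoords o fun i => Classical.arbitrary (In i)) ?_
  convert (Pi.basisFun ℝ (∀ i, CGIndex (In i) (o i))).linearIndependent
  ext t s
  simp [cgCoords_cgBehavior, Pi.single_apply]

theorem span_cgBehavior_eq (o : ∀ i, Out i) :
    Submodule.span ℝ (Set.range fun t : {t : ∀ i, CGIndex (In i) (o i) // t ≠ fun _ => none} =>
      cgBehavior o t.1) = nonsignaling In Out ⊓ zeroMass In Out := by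
  refine le_antisymm (Submodule.span_le.2 (Set.range_subset_iff.2 fun t => ?_)) ?_
  · exact ⟨cgBehavior_mem_nonsignaling o t.1, fun x => by simp [sum_cgBehavior, t.2.symm]⟩
  · rintro P ⟨hns, hmass⟩
    let x₀ : ∀ i, In i := fun i => Classical.arbitrary (In i)
    rw [← sum_cgCoords_smul_cgBehavior o x₀ hns]
    refine Submodule.sum_mem _ fun t _ => ?_
    by_cases ht : t = fun _ => none
    · simp [ht, cgCoords_none, hmass x₀]
    · exact Submodule.smul_mem _ _ (Submodule.subset_span ⟨⟨t, ht⟩, rfl⟩)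

theorem finrank_nonsignaling_inf_zeroMass [∀ i, Nonempty (Out i)] :
    Module.finrank ℝ (nonsignaling In Out ⊓ zeroMass In Out : Submodule ℝ (Behavior In Out)) =
      ∏ i, (Fintype.card (In i) * (Fintype.card (Out i) - 1) + 1) - 1 := by
  let o : ∀ i, Out i := fun i => Classical.arbitrary (Out i)
  rw [← span_cgBehavior_eq o]
  refine (finrank_span_eq_card
    ((linearIndependent_cgBehavior o).comp _ Subtype.val_injective)).trans ?_
  simp [Fintype.card_subtype_compl, Fintype.card_pi, Fintype.card_option]

end Dimension

section Affine

open Filter Topology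

variable (In Out) in
def nonsignalingBehaviors : Set (Behavior In Out) :=
  {P | (∀ a x, 0 ≤ P a x) ∧ (∀ x, ∑ a, P a x = 1) ∧ P ∈ nonsignaling In Out}

variable (In Out) in
noncomputable def uniformBehavior : Behavior In Out :=
  fun _ _ => (Fintype.card (∀ i, Out i) : ℝ)⁻¹

variable [∀ i, Nonempty (Out i)]

theorem uniformBehavior_mem : uniformBehavior In Out ∈ nonsignalingBehaviors In Out :=
  ⟨fun _ _ => inv_nonneg.2 (Nat.cast_nonneg _),
    fun _ => by
      simp only [uniformBehavior, sum_const, card_univ, nsmul_eq_mul]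
      exact mul_inv_cancel₀ (Nat.cast_ne_zero.2 Fintype.card_ne_zero),
    fun _ _ _ _ _ => rfl⟩

variable [∀ i, Fintype (In i)]

theorem exists_smul_add_uniformBehavior_mem {v : Behavior In Out}
    (hv : v ∈ nonsignaling In Out ⊓ zeroMass In Out) :
    ∃ ε : ℝ, ε ≠ 0 ∧ ε • v + uniformBehavior In Out ∈ nonsignalingBehaviors In Out := by
  have hpos : ∀ᶠ ε in 𝓝 (0 : ℝ), ∀ a x, 0 ≤ (ε • v + uniformBehavior In Out) a x := by
    simp only [Filter.eventually_all]
    intro a x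
    have hc : (0 : ℝ) < (Fintype.card (∀ i, Out i) : ℝ)⁻¹ :=
      inv_pos.2 (Nat.cast_pos.2 Fintype.card_pos)
    exact (ContinuousAt.eventually_lt continuousAt_const (by fun_prop)
      (by simpa [uniformBehavior] using hc)).mono fun ε h => h.le
  obtain ⟨ε, hε, hε0⟩ :=
    ((hpos.filter_mono nhdsWithin_le_nhds).and (self_mem_nhdsWithin (s := {0}ᶜ))).exists
  refine ⟨ε, hε0, hε, fun x => ?_, add_mem (Submodule.smul_mem _ ε hv.1) uniformBehavior_mem.2.2⟩
  simp [sum_add_distrib, ← mul_sum, hv.2 x, uniformBehavior_mem.2.1 x]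

theorem direction_affineSpan_nonsignalingBehaviors :
    (affineSpan ℝ (nonsignalingBehaviors In Out)).direction =
      nonsignaling In Out ⊓ zeroMass In Out :=
  direction_affineSpan_eq_of_smul_vadd_mem uniformBehavior_mem
    (fun Q hQ => ⟨sub_mem hQ.2.2 uniformBehavior_mem.2.2,
      fun x => by simp [sum_sub_distrib, hQ.2.1 x, uniformBehavior_mem.2.1 x]⟩)
    fun _ hv => exists_smul_add_uniformBehavior_mem hv

end Affine

end Nonsignaling

theorem nonsignaling_affine_dimension_general
    {m : ℕ}
    (X A : Fin m → ℕ) (hX : ∀ i, 1 ≤ X i) (hA : ∀ i, 1 ≤ A i) :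
    Module.finrank ℝ
      (affineSpan ℝ
        {P : (∀ i, Fin (A i)) → (∀ i, Fin (X i)) → ℝ |
          (∀ a x, 0 ≤ P a x) ∧
          (∀ x, ∑ a : ∀ i, Fin (A i), P a x = 1) ∧
          (∀ (i : Fin m) (a : ∀ i', Fin (A i')) (x x' : ∀ i', Fin (X i')),
            (∀ i', i' ≠ i → x i' = x' i') →
            ∑ ai : Fin (A i), P (Function.update a i ai) x =
              ∑ ai : Fin (A i), P (Function.update a i ai) x')}).direction =
      ∏ i, (X i * (A i - 1) + 1) - 1 := by
  have (i : Fin m) : Nonempty (Fin (X i)) := ⟨⟨0, hX i⟩⟩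
  have (i : Fin m) : Nonempty (Fin (A i)) := ⟨⟨0, hA i⟩⟩
  have h := Nonsignaling.finrank_nonsignaling_inf_zeroMass
    (In := fun i => Fin (X i)) (Out := fun i => Fin (A i))
  rw [← Nonsignaling.direction_affineSpan_nonsignalingBehaviors] at h
  simp only [Fintype.card_fin] at h
  exact h

/-- **Affine dimension of the nonsignaling set.** In the space of functions
`P : (∀ i, Fin (A i)) → (∀ i, Fin (X i)) → ℝ`, the set of nonsignaling
behaviors (nonnegative, normalized for each input, and with marginals over any
party's output independent of that party's input) has an affine span whose
direction has finrank `∏ᵢ [Xᵢ·(Aᵢ − 1) + 1] − 1`. -/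
theorem nonsignaling_affine_dimension
    {m : ℕ} (hm : 1 ≤ m)
    (X A : Fin m → ℕ) (hX : ∀ i, 1 ≤ X i) (hA : ∀ i, 1 ≤ A i) :
    Module.finrank ℝ
      (affineSpan ℝ
        {P : (∀ i, Fin (A i)) → (∀ i, Fin (X i)) → ℝ |
          (∀ a x, 0 ≤ P a x) ∧
          (∀ x, ∑ a : ∀ i, Fin (A i), P a x = 1) ∧
          (∀ (i : Fin m) (a : ∀ i', Fin (A i')) (x x' : ∀ i', Fin (X i')),
            (∀ i', i' ≠ i → x i' = x' i') →
            ∑ ai : Fin (A i), P (Function.update a i ai) x =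
              ∑ ai : Fin (A i), P (Function.update a i ai) x')}).direction =
      ∏ i, (X i * (A i - 1) + 1) - 1 :=
  nonsignaling_affine_dimension_general X A hX hA
end

section
/- In the bilocal scenario (three parties A, B, C with binary inputs x, y, z ∈ Fin 2 and binary outputs a, b, c ∈ Fin 2, where source 1 connects A and B and source 2 connects B and C), every bilocal behavior P(abc|xyz) — i.e., every behavior of the form P(abc|xyz) = ∫∫ R_A(a|x,λ₁) R_B(b|y,λ₁,λ₂) R_C(c|z,λ₂) dρ₁(λ₁) dρ₂(λ₂) for some probability measures ρ₁, ρ₂ on measurable spaces Ω₁, Ω₂ and measurable, nonnegative, output-normalized response functions — can be reproduced by a bilocal model in which the first hidden variable takes at most 4 values: there exist a probability distribution w on Fin 4, deterministic strategies for Alice indexed by Fin 4, and a (possibly modified) response function for B, with Ω₂ and ρ₂ unchanged, realizing the same P. -/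
/-!
Alice's response is a mixture of her deterministic strategies `f : X → A`: choosing each output
independently, `f` has weight `q_f(λ₁) = ∏ₓ RA(f x | x, λ₁)`, and
`RA(a|x,λ₁) = ∑_{f x = a} q_f(λ₁)`.
Replace `λ₁` by the label `f`, with prior `w_f = ∫ q_f dρ₁`, and give Bob his response averaged
against `q_f`, i.e. conditioned on the label; Fubini then shows that the behaviour is unchanged.
For binary input and output there are four labels.
-/

open MeasureTheory Finset
open scoped unitInterval

lemma mem_unitInterval_of_sum_eq_one {ι : Type*} [Fintype ι] {p : ι → ℝ} (h0 : ∀ i, 0 ≤ p i)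
    (h1 : ∑ i, p i = 1) (i : ι) : p i ∈ I :=
  ⟨h0 i, h1 ▸ single_le_sum (fun j _ => h0 j) (mem_univ i)⟩

lemma integrable_of_mem_unitInterval {α : Type*} [MeasurableSpace α] {μ : Measure α}
    [IsFiniteMeasure μ] {f : α → ℝ} (hf : Measurable f) (h : ∀ x, f x ∈ I) : Integrable f μ :=
  .of_mem_Icc 0 1 hf.aemeasurable (ae_of_all _ h)

lemma sum_integral_eq_one {Ω S : Type*} [MeasurableSpace Ω] [Fintype S] {ρ : Measure Ω}
    [IsProbabilityMeasure ρ] {q : S → Ω → ℝ} (hq_meas : ∀ s, Measurable (q s))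
    (hq_nonneg : ∀ s l, 0 ≤ q s l) (hq_sum : ∀ l, ∑ s, q s l = 1) :
    ∑ s, ∫ l, q s l ∂ρ = 1 := by
  rw [← integral_finsetSum _ fun s _ => integrable_of_mem_unitInterval (hq_meas s)
    fun l => mem_unitInterval_of_sum_eq_one (hq_nonneg · l) (hq_sum l) s]
  simp [hq_sum]

section Strategies
variable {X A : Type*} [Fintype X] [DecidableEq X] [Fintype A]

noncomputable def strategyWeight (p : A → X → ℝ) (f : X → A) : ℝ := ∏ x, p (f x) x

lemma sum_strategyWeight {p : A → X → ℝ} (hp : ∀ x, ∑ a, p a x = 1) :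
    ∑ f, strategyWeight p f = 1 := by
  simp [strategyWeight, ← Fintype.prod_sum fun x a => p a x, hp]

lemma sum_ite_mul_strategyWeight [DecidableEq A] {p : A → X → ℝ} (hp : ∀ x, ∑ a, p a x = 1)
    (a : A) (x : X) :
    ∑ f, strategyWeight p f * (if f x = a then 1 else 0) = p a x := by
  -- `p'` forbids outputs other than `a` at `x`, so expanding `∏ x', ∑ a', p' x' a'` keeps
  -- exactly the strategies with `f x = a`.
  let p' : X → A → ℝ := fun x' a' => (if x' = x ∧ a' ≠ a then 0 else 1) * p a' x'
  have hsum : ∀ x', ∑ a', p' x' a' = if x' = x then p a x' else 1 := by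
    intro x'
    split_ifs with h
    · subst h; simp [p']
    · simp [p', h, hp]
  calc ∑ f, strategyWeight p f * (if f x = a then 1 else 0)
      = ∑ f : X → A, ∏ x', p' x' (f x') := by
        refine sum_congr rfl fun f _ => ?_
        simp only [strategyWeight, p', prod_mul_distrib, mul_comm (∏ x, p (f x) x)]
        congr 1
        split_ifs with h
        · exact (prod_eq_one fun x' _ => if_neg fun h' => h'.2 (h'.1 ▸ h)).symm
        · exact (Finset.prod_eq_zero (mem_univ x) (by simp [h])).symm
    _ = p a x := by simp [← Fintype.prod_sum, hsum]
end Strategies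

section Conditioning

variable {Ω₁ Ω₂ B Y : Type*} [MeasurableSpace Ω₁] [Fintype B]
  {ρ₁ : Measure Ω₁} {q : Ω₁ → ℝ} {RB : B → Y → Ω₁ → Ω₂ → ℝ}

/-- Bob's response conditioned on the cell with membership function `q`; a cell of mass zero gets
the uniform response, which the behaviour never sees. -/
noncomputable def condResponse (ρ₁ : Measure Ω₁) (q : Ω₁ → ℝ) (RB : B → Y → Ω₁ → Ω₂ → ℝ)
    (b : B) (y : Y) (l₂ : Ω₂) : ℝ :=
  if ∫ l₁, q l₁ ∂ρ₁ = 0 then (Fintype.card B : ℝ)⁻¹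
  else (∫ l₁, q l₁ * RB b y l₁ l₂ ∂ρ₁) / ∫ l₁, q l₁ ∂ρ₁

lemma measurable_condResponse [MeasurableSpace Ω₂] [SFinite ρ₁] (hq : Measurable q)
    (hRB : ∀ b y, Measurable (Function.uncurry (RB b y))) (b : B) (y : Y) :
    Measurable (condResponse ρ₁ q RB b y) := by
  unfold condResponse
  split_ifs
  · exact measurable_const
  · exact (((hq.comp measurable_fst).mul (hRB b y)).stronglyMeasurable.integral_prod_left
      ).measurable.div_const _

lemma condResponse_nonneg (hq : ∀ l₁, 0 ≤ q l₁) (hRB : ∀ b y l₁ l₂, 0 ≤ RB b y l₁ l₂)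
    (b : B) (y : Y) (l₂ : Ω₂) : 0 ≤ condResponse ρ₁ q RB b y l₂ := by
  unfold condResponse
  split_ifs
  · positivity
  · exact div_nonneg (integral_nonneg fun l₁ => mul_nonneg (hq l₁) (hRB b y l₁ l₂))
      (integral_nonneg hq)

lemma integrable_mul_response [MeasurableSpace Ω₂] [IsFiniteMeasure ρ₁] (hq_meas : Measurable q)
    (hq : ∀ l₁, q l₁ ∈ I) (hRBmeas : ∀ b y, Measurable (Function.uncurry (RB b y)))
    (hRBpos : ∀ b y l₁ l₂, 0 ≤ RB b y l₁ l₂) (hRBnorm : ∀ y l₁ l₂, ∑ b, RB b y l₁ l₂ = 1)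
    (b : B) (y : Y) (l₂ : Ω₂) : Integrable (fun l₁ => q l₁ * RB b y l₁ l₂) ρ₁ :=
  integrable_of_mem_unitInterval (hq_meas.mul (hRBmeas b y).of_uncurry_right) fun l₁ =>
    unitInterval.mul_mem (hq l₁)
      (mem_unitInterval_of_sum_eq_one (hRBpos · y l₁ l₂) (hRBnorm y l₁ l₂) b)

lemma sum_condResponse [MeasurableSpace Ω₂] [Nonempty B] [IsFiniteMeasure ρ₁]
    (hq_meas : Measurable q) (hq : ∀ l₁, q l₁ ∈ I)
    (hRBmeas : ∀ b y, Measurable (Function.uncurry (RB b y)))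
    (hRBpos : ∀ b y l₁ l₂, 0 ≤ RB b y l₁ l₂) (hRBnorm : ∀ y l₁ l₂, ∑ b, RB b y l₁ l₂ = 1)
    (y : Y) (l₂ : Ω₂) : ∑ b, condResponse ρ₁ q RB b y l₂ = 1 := by
  unfold condResponse
  split_ifs with h
  · simp
  · rw [← sum_div, ← integral_finsetSum _ fun b _ =>
      integrable_mul_response hq_meas hq hRBmeas hRBpos hRBnorm b y l₂]
    simp [← mul_sum, hRBnorm, div_self h]

lemma condResponse_mem_unitInterval [MeasurableSpace Ω₂] [Nonempty B] [IsFiniteMeasure ρ₁]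
    (hq_meas : Measurable q) (hq : ∀ l₁, q l₁ ∈ I)
    (hRBmeas : ∀ b y, Measurable (Function.uncurry (RB b y)))
    (hRBpos : ∀ b y l₁ l₂, 0 ≤ RB b y l₁ l₂) (hRBnorm : ∀ y l₁ l₂, ∑ b, RB b y l₁ l₂ = 1)
    (b : B) (y : Y) (l₂ : Ω₂) : condResponse ρ₁ q RB b y l₂ ∈ I :=
  mem_unitInterval_of_sum_eq_one (condResponse_nonneg (fun l₁ => (hq l₁).1) hRBpos · y l₂)
    (sum_condResponse hq_meas hq hRBmeas hRBpos hRBnorm y l₂) b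

lemma integral_mul_condResponse (hq_nonneg : ∀ l₁, 0 ≤ q l₁) (hq : Integrable q ρ₁) (b : B) (y : Y)
    (l₂ : Ω₂) :
    (∫ l₁, q l₁ ∂ρ₁) * condResponse ρ₁ q RB b y l₂ = ∫ l₁, q l₁ * RB b y l₁ l₂ ∂ρ₁ := by
  unfold condResponse
  split_ifs with h
  · have hq_ae : q =ᵐ[ρ₁] 0 := (integral_eq_zero_iff_of_nonneg hq_nonneg hq).1 h
    rw [h, zero_mul, eq_comm]
    exact integral_eq_zero_of_ae (hq_ae.mono fun l₁ hl => by simp [hl])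
  · exact mul_div_cancel₀ _ h

lemma integral_mixture_mul_eq_sum {S : Type*} [Fintype S] [IsFiniteMeasure ρ₁] [MeasurableSpace Ω₂]
    (α : S → ℝ) {q : S → Ω₁ → ℝ} (hq_meas : ∀ s, Measurable (q s)) (hq_nonneg : ∀ s l₁, 0 ≤ q s l₁)
    (hq_sum : ∀ l₁, ∑ s, q s l₁ = 1) (hRBmeas : ∀ b y, Measurable (Function.uncurry (RB b y)))
    (hRBpos : ∀ b y l₁ l₂, 0 ≤ RB b y l₁ l₂) (hRBnorm : ∀ y l₁ l₂, ∑ b, RB b y l₁ l₂ = 1)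
    (b : B) (y : Y) (l₂ : Ω₂) :
    ∫ l₁, (∑ s, q s l₁ * α s) * RB b y l₁ l₂ ∂ρ₁ =
      ∑ s, (∫ l₁, q s l₁ ∂ρ₁) * (α s * condResponse ρ₁ (q s) RB b y l₂) := by
  have hq : ∀ s l₁, q s l₁ ∈ I := fun s l₁ =>
    mem_unitInterval_of_sum_eq_one (hq_nonneg · l₁) (hq_sum l₁) s
  simp_rw [mul_comm (q _ _) (α _), mul_left_comm _ (α _), integral_mul_condResponse (hq_nonneg _)
    (integrable_of_mem_unitInterval (hq_meas _) (hq _)), sum_mul, mul_assoc]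
  rw [integral_finsetSum _ fun s _ =>
    (integrable_mul_response (hq_meas s) (hq s) hRBmeas hRBpos hRBnorm b y l₂).const_mul (α s)]
  simp_rw [integral_const_mul]

end Conditioning

lemma integral_integral_mul_mul {Ω₁ Ω₂ : Type*} [MeasurableSpace Ω₁] [MeasurableSpace Ω₂]
    {ρ₁ : Measure Ω₁} {ρ₂ : Measure Ω₂} [IsFiniteMeasure ρ₁] [IsFiniteMeasure ρ₂]
    {r : Ω₁ → ℝ} {f : Ω₁ → Ω₂ → ℝ} {g : Ω₂ → ℝ} (hr_meas : Measurable r) (hr : ∀ l₁, r l₁ ∈ I)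
    (hf_meas : Measurable (Function.uncurry f)) (hf : ∀ l₁ l₂, f l₁ l₂ ∈ I)
    (hg_meas : Measurable g) (hg : ∀ l₂, g l₂ ∈ I) :
    ∫ l₁, ∫ l₂, r l₁ * f l₁ l₂ * g l₂ ∂ρ₂ ∂ρ₁ = ∫ l₂, (∫ l₁, r l₁ * f l₁ l₂ ∂ρ₁) * g l₂ ∂ρ₂ := by
  have hint : Integrable (Function.uncurry fun l₁ l₂ => r l₁ * f l₁ l₂ * g l₂) (ρ₁.prod ρ₂) :=
    integrable_of_mem_unitInterval
      (((hr_meas.comp measurable_fst).mul hf_meas).mul (hg_meas.comp measurable_snd))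
      fun p => unitInterval.mul_mem (unitInterval.mul_mem (hr _) (hf _ _)) (hg _)
  simp_rw [integral_integral_swap hint, integral_mul_const]

theorem integral_integral_eq_sum_condResponse {Ω₁ Ω₂ A X B Y C Z S : Type*} [MeasurableSpace Ω₁]
    [MeasurableSpace Ω₂] [DecidableEq A] [Fintype B] [Nonempty B] [Fintype C] [Fintype S]
    {ρ₁ : Measure Ω₁} {ρ₂ : Measure Ω₂} [IsFiniteMeasure ρ₁] [IsFiniteMeasure ρ₂]
    {RA : A → X → Ω₁ → ℝ} {RB : B → Y → Ω₁ → Ω₂ → ℝ} {RC : C → Z → Ω₂ → ℝ}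
    {D : S → X → A} {q : S → Ω₁ → ℝ} (hq_meas : ∀ s, Measurable (q s))
    (hq_nonneg : ∀ s l₁, 0 ≤ q s l₁) (hq_sum : ∀ l₁, ∑ s, q s l₁ = 1)
    (hRA : ∀ a x l₁, RA a x l₁ = ∑ s, q s l₁ * (if D s x = a then 1 else 0))
    (hRBmeas : ∀ b y, Measurable (Function.uncurry (RB b y)))
    (hRBpos : ∀ b y l₁ l₂, 0 ≤ RB b y l₁ l₂) (hRBnorm : ∀ y l₁ l₂, ∑ b, RB b y l₁ l₂ = 1)
    (hRCmeas : ∀ c z, Measurable (RC c z)) (hRCpos : ∀ c z l₂, 0 ≤ RC c z l₂)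
    (hRCnorm : ∀ z l₂, ∑ c, RC c z l₂ = 1) (a : A) (b : B) (c : C) (x : X) (y : Y) (z : Z) :
    ∫ l₁, ∫ l₂, RA a x l₁ * RB b y l₁ l₂ * RC c z l₂ ∂ρ₂ ∂ρ₁ =
      ∑ s, (∫ l₁, q s l₁ ∂ρ₁) *
        ∫ l₂, (if D s x = a then 1 else 0) * condResponse ρ₁ (q s) RB b y l₂ * RC c z l₂ ∂ρ₂ := by
  have hq : ∀ s l₁, q s l₁ ∈ I := fun s l₁ =>
    mem_unitInterval_of_sum_eq_one (hq_nonneg · l₁) (hq_sum l₁) s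
  have hD : ∀ s, (if D s x = a then (1 : ℝ) else 0) ∈ I := fun s => by split_ifs <;> simp
  have hRA_meas : Measurable (RA a x) := by
    rw [funext (hRA a x)]
    exact Finset.measurable_sum _ fun s _ => (hq_meas s).mul_const _
  have hRA_mem : ∀ l₁, RA a x l₁ ∈ I := fun l₁ => by
    simpa only [hRA, smul_eq_mul] using
      (convex_Icc (0 : ℝ) 1).sum_mem (fun s _ => hq_nonneg s l₁) (hq_sum l₁) fun s _ => hD s
  have hRB_mem : ∀ l₁ l₂, RB b y l₁ l₂ ∈ I := fun l₁ l₂ =>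
    mem_unitInterval_of_sum_eq_one (hRBpos · y l₁ l₂) (hRBnorm y l₁ l₂) b
  have hRC_mem : ∀ l₂, RC c z l₂ ∈ I := fun l₂ =>
    mem_unitInterval_of_sum_eq_one (hRCpos · z l₂) (hRCnorm z l₂) c
  have hRB'C_int : ∀ s, Integrable (fun l₂ => condResponse ρ₁ (q s) RB b y l₂ * RC c z l₂) ρ₂ :=
    fun s => integrable_of_mem_unitInterval
      ((measurable_condResponse (hq_meas s) hRBmeas b y).mul (hRCmeas c z))
      fun l₂ => unitInterval.mul_mem
        (condResponse_mem_unitInterval (hq_meas s) (hq s) hRBmeas hRBpos hRBnorm b y l₂)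
        (hRC_mem l₂)
  rw [integral_integral_mul_mul hRA_meas hRA_mem (hRBmeas b y) hRB_mem (hRCmeas c z) hRC_mem]
  simp_rw [hRA, integral_mixture_mul_eq_sum _ hq_meas hq_nonneg hq_sum hRBmeas hRBpos hRBnorm,
    sum_mul, mul_assoc]
  rw [integral_finsetSum _ fun s _ => ((hRB'C_int s).const_mul _).const_mul _]
  simp_rw [integral_const_mul]

/-- **Cardinality 4 for the first source of the bilocal scenario.** Every
bilocal behavior `P(abc|xyz)` can be reproduced by a bilocal model in which the
first hidden variable takes at most 4 values: there exist a probability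
distribution `w` on `Fin 4`, deterministic strategies `DA : Fin 4 → Fin 2 → Fin 2`
for Alice, and a (possibly modified) response function `RB'` for Bob, with `Ω₂`
and `ρ₂` unchanged, realizing the same `P`. -/
theorem bilocal_first_source_four_values
    (Ω₁ Ω₂ : Type) [MeasurableSpace Ω₁] [MeasurableSpace Ω₂]
    (ρ₁ : Measure Ω₁) (ρ₂ : Measure Ω₂)
    [IsProbabilityMeasure ρ₁] [IsProbabilityMeasure ρ₂]
    (RA : Fin 2 → Fin 2 → Ω₁ → ℝ)
    (RB : Fin 2 → Fin 2 → Ω₁ → Ω₂ → ℝ)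
    (RC : Fin 2 → Fin 2 → Ω₂ → ℝ)
    (hRAmeas : ∀ a x, Measurable (RA a x))
    (hRBmeas : ∀ b y, Measurable (Function.uncurry (RB b y)))
    (hRCmeas : ∀ c z, Measurable (RC c z))
    (hRApos : ∀ a x l₁, 0 ≤ RA a x l₁)
    (hRBpos : ∀ b y l₁ l₂, 0 ≤ RB b y l₁ l₂)
    (hRCpos : ∀ c z l₂, 0 ≤ RC c z l₂)
    (hRAnorm : ∀ x l₁, ∑ a, RA a x l₁ = 1)
    (hRBnorm : ∀ y l₁ l₂, ∑ b, RB b y l₁ l₂ = 1)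
    (hRCnorm : ∀ z l₂, ∑ c, RC c z l₂ = 1)
    (P : Fin 2 → Fin 2 → Fin 2 → Fin 2 → Fin 2 → Fin 2 → ℝ)
    (hP : ∀ a b c x y z, P a b c x y z =
      ∫ l₁, ∫ l₂, RA a x l₁ * RB b y l₁ l₂ * RC c z l₂ ∂ρ₂ ∂ρ₁) :
    ∃ (w : Fin 4 → ℝ) (DA : Fin 4 → Fin 2 → Fin 2)
      (RB' : Fin 2 → Fin 2 → Fin 4 → Ω₂ → ℝ),
      (∀ k, 0 ≤ w k) ∧ (∑ k, w k = 1) ∧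
      (∀ b y k, Measurable (RB' b y k)) ∧
      (∀ b y k l₂, 0 ≤ RB' b y k l₂) ∧
      (∀ y k l₂, ∑ b, RB' b y k l₂ = 1) ∧
      ∀ a b c x y z, P a b c x y z =
        ∑ k : Fin 4, w k *
          ∫ l₂, (if DA k x = a then (1 : ℝ) else 0) * RB' b y k l₂ * RC c z l₂ ∂ρ₂ := by
  classical
  let e : (Fin 2 → Fin 2) ≃ Fin 4 := Fintype.equivFinOfCardEq (by simp)
  let q : Fin 4 → Ω₁ → ℝ := fun k l₁ => strategyWeight (fun a x => RA a x l₁) (e.symm k)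
  have hq_meas : ∀ k, Measurable (q k) := fun k =>
    Finset.measurable_prod _ fun x _ => hRAmeas _ _
  have hq_nonneg : ∀ k l₁, 0 ≤ q k l₁ := fun k l₁ => prod_nonneg fun x _ => hRApos _ _ _
  have hq_sum : ∀ l₁, ∑ k, q k l₁ = 1 := fun l₁ =>
    (e.symm.sum_comp _).trans (sum_strategyWeight (hRAnorm · l₁))
  have hRA : ∀ a x l₁, RA a x l₁ = ∑ k, q k l₁ * (if e.symm k x = a then 1 else 0) :=
    fun a x l₁ => ((e.symm.sum_comp fun f =>
      strategyWeight (fun a x => RA a x l₁) f * (if f x = a then 1 else 0)).trans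
        (sum_ite_mul_strategyWeight (hRAnorm · l₁) a x)).symm
  refine ⟨fun k => ∫ l₁, q k l₁ ∂ρ₁, e.symm, fun b y k => condResponse ρ₁ (q k) RB b y,
    fun k => integral_nonneg (hq_nonneg k), sum_integral_eq_one hq_meas hq_nonneg hq_sum,
    fun b y k => measurable_condResponse (hq_meas k) hRBmeas b y,
    fun b y k => condResponse_nonneg (hq_nonneg k) hRBpos b y,
    fun y k => sum_condResponse (hq_meas k)
      (fun l₁ => mem_unitInterval_of_sum_eq_one (hq_nonneg · l₁) (hq_sum l₁) k)
      hRBmeas hRBpos hRBnorm y,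
    fun a b c x y z => ?_⟩
  rw [hP]
  exact integral_integral_eq_sum_condResponse hq_meas hq_nonneg hq_sum hRA hRBmeas hRBpos
    hRBnorm hRCmeas hRCpos hRCnorm a b c x y z
end
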